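/- arXiv:1410.8580 — 10 statements merged into one kernel-verified Lean document; each statement's English description precedes it below -/
import Mathlib

section
/- Let K ≤ n, let μ_1, …, μ_K ∈ ℝ^n be linearly independent, let λ_1, …, λ_K > 0, set M = Σ_k λ_k μ_k μ_kᵀ and T = Σ_k λ_k μ_k ⊗ μ_k ⊗ μ_k. Let W = U D^{-1/2} be a whitening matrix for M (i.e., M = U D Uᵀ with U ∈ ℝ^{n×K} having orthonormal columns spanning the column space of M and D diagonal positive), and set μ̃_k = √λ_k Wᵀ μ_k. Then T(W, W, W) = Σ_{k=1}^K λ_k^{-1/2} μ̃_k ⊗ μ̃_k ⊗ μ̃_k, where the vectors μ̃_k are orthonormal; i.e., the whitened third-moment tensor is an orthogonal tensor of rank K. -/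
/-!
Write `ν k = Wᵀ μ k`, so that `μ̃ k = √(λ k) ν k`. Multilinearity gives
`T(W, W, W) = ∑ k, λ k ν k ⊗ ν k ⊗ ν k = ∑ k, (λ k)^{-1/2} μ̃ k ⊗ μ̃ k ⊗ μ̃ k`. For orthonormality,
let `B` be the `K × K` matrix with rows `μ̃ k`. Then `Bᵀ B = ∑ k, λ k ν k ν kᵀ = Wᵀ M W`, and
`Wᵀ M W = D^{-1/2} Uᵀ U D Uᵀ U D^{-1/2} = 1` because `U` has orthonormal columns. So `B` is an
orthogonal matrix, hence also `B Bᵀ = 1`, i.e. its rows are orthonormal.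
-/

open Matrix

section

variable {R : Type*} [CommRing R] {m p ι : Type*} [Fintype m] [Fintype ι]

lemma transpose_mulVec_mul_mul (v : m → R) (W : Matrix m p R) (i₁ i₂ i₃ : p) :
    (Wᵀ *ᵥ v) i₁ * (Wᵀ *ᵥ v) i₂ * (Wᵀ *ᵥ v) i₃ =
      ∑ j₁, ∑ j₂, ∑ j₃, v j₁ * v j₂ * v j₃ * W j₁ i₁ * W j₂ i₂ * W j₃ i₃ := by
  simp only [mulVec, dotProduct, transpose_apply, Finset.sum_mul]
  simp only [Finset.mul_sum, Finset.sum_mul]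
  refine Fintype.sum_congr _ _ fun j₁ => ?_
  rw [Finset.sum_comm]
  exact Fintype.sum_congr _ _ fun j₂ => Fintype.sum_congr _ _ fun j₃ => by ring

lemma sum_cube_mul_mul_mul (c : ι → R) (v : ι → m → R) (W : Matrix m p R) (i₁ i₂ i₃ : p) :
    ∑ j₁, ∑ j₂, ∑ j₃, (∑ k, c k * v k j₁ * v k j₂ * v k j₃) * W j₁ i₁ * W j₂ i₂ * W j₃ i₃ =
      ∑ k, c k * (Wᵀ *ᵥ v k) i₁ * (Wᵀ *ᵥ v k) i₂ * (Wᵀ *ᵥ v k) i₃ := by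
  simp only [mul_assoc (c _), transpose_mulVec_mul_mul, Finset.mul_sum, Finset.sum_mul]
  simp only [Finset.sum_comm (γ := ι)]

lemma transpose_mul_sum_smul_vecMulVec_mul (W : Matrix m p R) (c : ι → R) (v : ι → m → R) :
    Wᵀ * (∑ k, c k • vecMulVec (v k) (v k)) * W =
      ∑ k, c k • vecMulVec (Wᵀ *ᵥ v k) (Wᵀ *ᵥ v k) := by
  simp only [Matrix.mul_sum, Matrix.sum_mul, Matrix.mul_smul, Matrix.smul_mul, mul_vecMulVec,
    vecMulVec_mul, mulVec_transpose]

lemma transpose_mul_self_eq_sum_vecMulVec [Fintype p] (B : Matrix ι p R) :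
    Bᵀ * B = ∑ k, vecMulVec (B k) (B k) := by
  ext i j
  simp [mul_apply, Matrix.sum_apply, vecMulVec_apply]

lemma transpose_mul_mul_mul_of_transpose_mul_eq_one {n : Type*} [Fintype p] [DecidableEq p]
    {U : Matrix m p R} (hU : Uᵀ * U = 1) (A C : Matrix p n R) (B : Matrix p p R) :
    (U * A)ᵀ * (U * B * Uᵀ) * (U * C) = Aᵀ * B * C := by
  simp only [transpose_mul, Matrix.mul_assoc]
  rw [← Matrix.mul_assoc Uᵀ U, hU, Matrix.one_mul, ← Matrix.mul_assoc Uᵀ U, hU, Matrix.one_mul]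

end

lemma diagonal_inv_sqrt_mul_diagonal_mul_diagonal_inv_sqrt {p : Type*} [Fintype p] [DecidableEq p]
    {d : p → ℝ} (hd : ∀ k, 0 < d k) :
    (diagonal fun k => (√(d k))⁻¹)ᵀ * diagonal d * diagonal (fun k => (√(d k))⁻¹) = 1 := by
  rw [diagonal_transpose, diagonal_mul_diagonal, diagonal_mul_diagonal, ← diagonal_one]
  congr 1
  ext k
  have hsq := Real.mul_self_sqrt (hd k).le
  have hpos := (Real.sqrt_pos.2 (hd k)).ne'
  field_simp
  linarith

lemma whitening_transpose_mul_mul {m p : Type*} [Fintype m] [Fintype p] [DecidableEq p]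
    {U : Matrix m p ℝ} (hU : Uᵀ * U = 1) {d : p → ℝ} (hd : ∀ k, 0 < d k) :
    (U * diagonal fun k => (√(d k))⁻¹)ᵀ * (U * diagonal d * Uᵀ) *
      (U * diagonal fun k => (√(d k))⁻¹) = 1 := by
  rw [transpose_mul_mul_mul_of_transpose_mul_eq_one hU,
    diagonal_inv_sqrt_mul_diagonal_mul_diagonal_inv_sqrt hd]

lemma dotProduct_eq_ite_of_transpose_mul_eq_one {p : Type*} [Fintype p] [DecidableEq p]
    {B : Matrix p p ℝ} (hB : Bᵀ * B = 1) (j k : p) :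
    B j ⬝ᵥ B k = if j = k then 1 else 0 := by
  have hBBt : B * Bᵀ = 1 := mul_eq_one_comm.mp hB
  simpa [mul_apply, one_apply, dotProduct] using congrFun (congrFun hBBt j) k

lemma inv_sqrt_mul_sqrt_mul_mul {l : ℝ} (hl : 0 < l) (x y z : ℝ) :
    (√l)⁻¹ * (√l * x) * (√l * y) * (√l * z) = l * x * y * z := by
  have hsq := Real.mul_self_sqrt hl.le
  have hpos := (Real.sqrt_pos.2 hl).ne'
  field_simp
  linear_combination x * y * z * hsq

theorem whitened_third_moment_is_orthogonal_tensor_general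
    (n K : ℕ)
    (μ : Fin K → Fin n → ℝ)
    (lam : Fin K → ℝ) (hlam : ∀ k, 0 < lam k)
    (M : Matrix (Fin n) (Fin n) ℝ)
    (hM : M = ∑ k, lam k • vecMulVec (μ k) (μ k))
    (T : Fin n → Fin n → Fin n → ℝ)
    (hT : ∀ i j l, T i j l = ∑ k, lam k * μ k i * μ k j * μ k l)
    (U : Matrix (Fin n) (Fin K) ℝ) (hU : Uᵀ * U = 1)
    (dvec : Fin K → ℝ) (hdvec : ∀ k, 0 < dvec k)
    (hUDU : M = U * Matrix.diagonal dvec * Uᵀ)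
    (W : Matrix (Fin n) (Fin K) ℝ)
    (hW : W = U * Matrix.diagonal (fun k => (Real.sqrt (dvec k))⁻¹))
    (μt : Fin K → Fin K → ℝ)
    (hμt : ∀ k, μt k = Real.sqrt (lam k) • (Wᵀ).mulVec (μ k)) :
    (∀ i₁ i₂ i₃ : Fin K,
      (∑ j₁, ∑ j₂, ∑ j₃, T j₁ j₂ j₃ * W j₁ i₁ * W j₂ i₂ * W j₃ i₃) =
        ∑ k, (Real.sqrt (lam k))⁻¹ * μt k i₁ * μt k i₂ * μt k i₃) ∧
    (∀ j k, μt j ⬝ᵥ μt k = if j = k then 1 else 0) := by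
  refine ⟨fun i₁ i₂ i₃ => ?_, fun j k => ?_⟩
  · simp only [hT, sum_cube_mul_mul_mul, hμt, Pi.smul_apply, smul_eq_mul,
      inv_sqrt_mul_sqrt_mul_mul (hlam _)]
  · have hWMW : Wᵀ * M * W = 1 := by
      rw [hW, hUDU]
      exact whitening_transpose_mul_mul hU hdvec
    have hrows : (of μt)ᵀ * of μt = 1 := by
      rw [transpose_mul_self_eq_sum_vecMulVec, ← hWMW, hM, transpose_mul_sum_smul_vecMulVec_mul]
      refine Fintype.sum_congr _ _ fun k => ?_
      change vecMulVec (μt k) (μt k) = _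
      rw [hμt, smul_vecMulVec, vecMulVec_smul, smul_smul,
        Real.mul_self_sqrt (hlam k).le]
    exact dotProduct_eq_ite_of_transpose_mul_eq_one hrows j k

/-- **The whitened third-moment tensor is an orthogonal tensor of rank `K`.**
With `T = ∑ k, λ k • μ k ⊗ μ k ⊗ μ k`, `M = ∑ k, λ k • μ k μ kᵀ`, a whitening
matrix `W = U D^{-1/2}` for `M`, and `μ̃ k = √(λ k) • Wᵀ μ k`, one has
`T(W, W, W) = ∑ k, (λ k)^{-1/2} • μ̃ k ⊗ μ̃ k ⊗ μ̃ k`, with the `μ̃ k`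
orthonormal. -/
theorem whitened_third_moment_is_orthogonal_tensor
    (n K : ℕ) (hKn : K ≤ n)
    (μ : Fin K → Fin n → ℝ) (hμ : LinearIndependent ℝ μ)
    (lam : Fin K → ℝ) (hlam : ∀ k, 0 < lam k)
    (M : Matrix (Fin n) (Fin n) ℝ)
    (hM : M = ∑ k, lam k • vecMulVec (μ k) (μ k))
    (T : Fin n → Fin n → Fin n → ℝ)
    (hT : ∀ i j l, T i j l = ∑ k, lam k * μ k i * μ k j * μ k l)
    (U : Matrix (Fin n) (Fin K) ℝ) (hU : Uᵀ * U = 1)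
    (dvec : Fin K → ℝ) (hdvec : ∀ k, 0 < dvec k)
    (hUDU : M = U * Matrix.diagonal dvec * Uᵀ)
    (hspan : Submodule.span ℝ (Set.range fun k => (fun i => U i k)) =
      Submodule.span ℝ (Set.range fun j => (fun i => M i j)))
    (W : Matrix (Fin n) (Fin K) ℝ)
    (hW : W = U * Matrix.diagonal (fun k => (Real.sqrt (dvec k))⁻¹))
    (μt : Fin K → Fin K → ℝ)
    (hμt : ∀ k, μt k = Real.sqrt (lam k) • (Wᵀ).mulVec (μ k)) :
    (∀ i₁ i₂ i₃ : Fin K,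
      (∑ j₁, ∑ j₂, ∑ j₃, T j₁ j₂ j₃ * W j₁ i₁ * W j₂ i₂ * W j₃ i₃) =
        ∑ k, (Real.sqrt (lam k))⁻¹ * μt k i₁ * μt k i₂ * μt k i₃) ∧
    (∀ j k, μt j ⬝ᵥ μt k = if j = k then 1 else 0) :=
  whitened_third_moment_is_orthogonal_tensor_general n K μ lam hlam M hM T hT U hU dvec hdvec hUDU W
    hW μt hμt
end

section
/- Let (Ω, ℱ, P) be a probability space, let Z : Ω → {1, …, K} be a random latent class with P(Z = k) = α_k where α_k > 0 and Σ_k α_k = 1, and let X¹, X², X³ : Ω → ℝ^n be integrable random vectors such that for every k, under the conditional probability measure P(· | Z = k), the vectors X¹, X², X³ are mutually independent and each has conditional mean E[Xⁱ | Z = k] = d_k ∈ ℝ^n. Then E[X¹ ⊗ X²] = Σ_{k=1}^K α_k d_k ⊗ d_k and E[X¹ ⊗ X² ⊗ X³] = Σ_{k=1}^K α_k d_k ⊗ d_k ⊗ d_k. -/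
/-! Conditioning on `Z` decomposes `P` as `∑ k, α k • P[|Z ⁻¹' {k}]` (law of total probability),
and under each conditional measure independence factors a moment into the product of the
conditional means `d k`. -/

open MeasureTheory ProbabilityTheory

theorem integral_eq_sum_measureReal_mul_integral_cond {Ω ι : Type*} [MeasurableSpace Ω]
    [Fintype ι] [MeasurableSpace ι] [DiscreteMeasurableSpace ι]
    (μ : Measure Ω) [IsFiniteMeasure μ] {Z : Ω → ι} (hZ : Measurable Z)
    {f : Ω → ℝ} (hf : Integrable f μ) :
    ∫ ω, f ω ∂μ = ∑ k, μ.real (Z ⁻¹' {k}) * ∫ ω, f ω ∂μ[|Z ⁻¹' {k}] := by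
  rw [← sum_meas_smul_cond_fiber hZ μ] at hf
  conv_lhs => rw [← sum_meas_smul_cond_fiber hZ μ]
  rw [integral_finsetSum_measure fun k _ ↦
    integrable_finsetSum_measure.mp hf k (Finset.mem_univ k)]
  simp only [integral_smul_measure, smul_eq_mul, measureReal_def]

theorem ProbabilityTheory.iIndepFun.integral_comp_mul_comp_mul_comp {Ω E : Type*}
    [MeasurableSpace Ω] [MeasurableSpace E] {μ : Measure Ω} {X : Fin 3 → Ω → E} (hX : iIndepFun X μ)
    (mX : ∀ i, AEMeasurable (X i) μ) {f g h : E → ℝ} (hf : Measurable f) (hg : Measurable g)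
    (hh : Measurable h) :
    ∫ ω, f (X 0 ω) * g (X 1 ω) * h (X 2 ω) ∂μ =
      (∫ ω, f (X 0 ω) ∂μ) * (∫ ω, g (X 1 ω) ∂μ) * ∫ ω, h (X 2 ω) ∂μ := by
  have hfgh : ∀ i, Measurable (![f, g, h] i) := by
    intro i
    fin_cases i <;> assumption
  simpa [Fin.prod_univ_three] using
    hX.integral_fun_prod_comp mX fun i ↦ (hfgh i).aestronglyMeasurable

theorem mixture_moment_tensors_general
    {Ω : Type*} [MeasurableSpace Ω] (P : Measure Ω) [IsProbabilityMeasure P]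
    (K n : ℕ) (Z : Ω → Fin K) (hZ : Measurable Z)
    (α : Fin K → ℝ) (hα : ∀ k, 0 < α k)
    (hPZ : ∀ k, P (Z ⁻¹' {k}) = ENNReal.ofReal (α k))
    (X : Fin 3 → Ω → Fin n → ℝ) (hX : ∀ i, Measurable (X i))
    (d : Fin K → Fin n → ℝ)
    (hindep : ∀ k,
      iIndepFun X (P[|Z ⁻¹' {k}]))
    (hmean : ∀ i k j, (∫ ω, X i ω j ∂(P[|Z ⁻¹' {k}])) = d k j)
    (hint2 : ∀ i j, Integrable (fun ω => X 0 ω i * X 1 ω j) P)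
    (hint3 : ∀ i j l, Integrable (fun ω => X 0 ω i * X 1 ω j * X 2 ω l) P) :
    (∀ i j, (∫ ω, X 0 ω i * X 1 ω j ∂P) = ∑ k, α k * (d k i * d k j)) ∧
    (∀ i j l, (∫ ω, X 0 ω i * X 1 ω j * X 2 ω l ∂P) =
      ∑ k, α k * (d k i * d k j * d k l)) := by
  have hfiber : ∀ k, P.real (Z ⁻¹' {k}) = α k := fun k ↦ by
    rw [measureReal_def, hPZ, ENNReal.toReal_ofReal (hα k).le]
  have hmoment₂ : ∀ k i j, ∫ ω, X 0 ω i * X 1 ω j ∂(P[|Z ⁻¹' {k}]) = d k i * d k j := by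
    intro k i j
    have := (hindep k).isProbabilityMeasure
    -- the second moment is the third one with the constant third factor `1`
    simpa [hmean] using (hindep k).integral_comp_mul_comp_mul_comp
      (fun m ↦ (hX m).aemeasurable) (measurable_pi_apply i) (measurable_pi_apply j)
      (measurable_const (a := (1 : ℝ)))
  have hmoment₃ : ∀ k i j l, ∫ ω, X 0 ω i * X 1 ω j * X 2 ω l ∂(P[|Z ⁻¹' {k}]) =
      d k i * d k j * d k l := fun k i j l ↦ by
    rw [← hmean 0 k i, ← hmean 1 k j, ← hmean 2 k l]
    exact (hindep k).integral_comp_mul_comp_mul_comp (fun m ↦ (hX m).aemeasurable)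
      (measurable_pi_apply i) (measurable_pi_apply j) (measurable_pi_apply l)
  constructor
  · intro i j
    rw [integral_eq_sum_measureReal_mul_integral_cond P hZ (hint2 i j)]
    exact Finset.sum_congr rfl fun k _ ↦ by rw [hfiber, hmoment₂]
  · intro i j l
    rw [integral_eq_sum_measureReal_mul_integral_cond P hZ (hint3 i j l)]
    exact Finset.sum_congr rfl fun k _ ↦ by rw [hfiber, hmoment₃]

/-- **Low-rank moment tensors from conditionally independent triplets.**
If `Z` is a latent class with `P(Z = k) = α k`, and `X 0, X 1, X 2` are
integrable random vectors that are mutually independent with common mean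
`d k` under each conditional measure `P(· | Z = k)`, then
`E[X¹ ⊗ X²] = ∑ k, α k • d k ⊗ d k` and
`E[X¹ ⊗ X² ⊗ X³] = ∑ k, α k • d k ⊗ d k ⊗ d k` (entrywise). -/
theorem mixture_moment_tensors
    {Ω : Type*} [MeasurableSpace Ω] (P : Measure Ω) [IsProbabilityMeasure P]
    (K n : ℕ) (Z : Ω → Fin K) (hZ : Measurable Z)
    (α : Fin K → ℝ) (hα : ∀ k, 0 < α k) (hαsum : ∑ k, α k = 1)
    (hPZ : ∀ k, P (Z ⁻¹' {k}) = ENNReal.ofReal (α k))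
    (X : Fin 3 → Ω → Fin n → ℝ) (hX : ∀ i, Measurable (X i))
    (d : Fin K → Fin n → ℝ)
    (hindep : ∀ k,
      iIndepFun X (P[|Z ⁻¹' {k}]))
    (hint : ∀ i j, ∀ k, Integrable (fun ω => X i ω j) (P[|Z ⁻¹' {k}]))
    (hmean : ∀ i k j, (∫ ω, X i ω j ∂(P[|Z ⁻¹' {k}])) = d k j)
    (hint2 : ∀ i j, Integrable (fun ω => X 0 ω i * X 1 ω j) P)
    (hint2' : ∀ i j k,
      Integrable (fun ω => X 0 ω i * X 1 ω j) (P[|Z ⁻¹' {k}]))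
    (hint3 : ∀ i j l, Integrable (fun ω => X 0 ω i * X 1 ω j * X 2 ω l) P)
    (hint3' : ∀ i j l k,
      Integrable (fun ω => X 0 ω i * X 1 ω j * X 2 ω l) (P[|Z ⁻¹' {k}])) :
    (∀ i j, (∫ ω, X 0 ω i * X 1 ω j ∂P) = ∑ k, α k * (d k i * d k j)) ∧
    (∀ i j l, (∫ ω, X 0 ω i * X 1 ω j * X 2 ω l ∂P) =
      ∑ k, α k * (d k i * d k j * d k l)) :=
  mixture_moment_tensors_general P K n Z hZ α hα hPZ X hX d hindep hmean hint2 hint3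
end

section
/- (Critical points of the expected BCM update.) Let K = n, let d_1, …, d_K ∈ ℝ^n be linearly independent, and let α_1, …, α_K > 0 with Σ_k α_k = 1. For m ∈ ℝ^n set c_k(m) = ⟨m, d_k⟩, θ(m) = Σ_k α_k c_k(m)², and φ_k(m) = c_k(m)(c_k(m) − θ(m)). Then the expected update h(m) = Σ_k α_k φ_k(m) d_k vanishes if and only if there exists a subset S ⊆ {1, …, K} (possibly empty) such that c_k(m) = (Σ_{i∈S} α_i)^{-1} for all k ∈ S and c_k(m) = 0 for all k ∉ S. -/
open Matrix

/-!
By linear independence of the `d k`, the update vanishes iff every coefficient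
`α k c k (c k − θ)` does, i.e. iff each `c k` is `0` or `θ`. Taking `S` to be the support of
`c`, the definition of `θ` becomes `θ = (∑_{i ∈ S} α i) θ²`, which forces
`θ = (∑_{i ∈ S} α i)⁻¹` as soon as `S` is nonempty. Conversely such a profile has
`θ = (∑_{i ∈ S} α i)⁻¹`, so every `c k` is `0` or `θ` again.
-/

section

variable {ι K : Type*} [Fintype ι] [Field K] {α c : ι → K}

theorem sum_mul_sq_eq_of_eq_on_of_eq_zero_off {S : Finset ι} {t : K}
    (hS : ∀ k ∈ S, c k = t) (hSc : ∀ k ∉ S, c k = 0) :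
    ∑ k, α k * c k ^ 2 = (∑ k ∈ S, α k) * t ^ 2 := by
  rw [← Finset.sum_subset S.subset_univ fun k _ hk => by simp [hSc k hk], Finset.sum_mul]
  exact Finset.sum_congr rfl fun k hk => by rw [hS k hk]

theorem exists_finset_of_forall_eq_zero_or_eq_sum_mul_sq
    (h : ∀ k, c k = 0 ∨ c k = ∑ j, α j * c j ^ 2) :
    ∃ S : Finset ι, (∀ k ∈ S, c k = (∑ i ∈ S, α i)⁻¹) ∧ ∀ k ∉ S, c k = 0 := by
  classical
  set θ := ∑ j, α j * c j ^ 2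
  let S := Finset.univ.filter fun k => c k ≠ 0
  have hS : ∀ k ∈ S, c k = θ := fun k hk =>
    (h k).resolve_left (Finset.mem_filter.mp hk).2
  have hSc : ∀ k ∉ S, c k = 0 := fun k hk => by simpa [S] using hk
  have hθ : θ = (∑ i ∈ S, α i) * θ ^ 2 := sum_mul_sq_eq_of_eq_on_of_eq_zero_off hS hSc
  refine ⟨S, fun k hk => ?_, hSc⟩
  have hθ0 : θ ≠ 0 := hS k hk ▸ (Finset.mem_filter.mp hk).2
  rw [hS k hk]
  exact eq_inv_of_mul_eq_one_right <| mul_left_cancel₀ hθ0 (by linear_combination -hθ)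

theorem forall_eq_zero_or_eq_sum_mul_sq_of_finset {S : Finset ι}
    (hS : ∀ k ∈ S, c k = (∑ i ∈ S, α i)⁻¹) (hSc : ∀ k ∉ S, c k = 0) :
    ∀ k, c k = 0 ∨ c k = ∑ j, α j * c j ^ 2 := by
  intro k
  by_cases hk : k ∈ S
  · by_cases hA : ∑ i ∈ S, α i = 0
    · exact .inl (by simp [hS k hk, hA])
    · refine .inr ?_
      rw [sum_mul_sq_eq_of_eq_on_of_eq_zero_off hS hSc, hS k hk]
      field_simp
  · exact .inl (hSc k hk)

theorem forall_eq_zero_or_eq_sum_mul_sq_iff :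
    (∀ k, c k = 0 ∨ c k = ∑ j, α j * c j ^ 2) ↔
      ∃ S : Finset ι, (∀ k ∈ S, c k = (∑ i ∈ S, α i)⁻¹) ∧ ∀ k ∉ S, c k = 0 :=
  ⟨exists_finset_of_forall_eq_zero_or_eq_sum_mul_sq,
    fun ⟨_, hS, hSc⟩ => forall_eq_zero_or_eq_sum_mul_sq_of_finset hS hSc⟩

end

theorem LinearIndependent.sum_smul_eq_zero_iff {ι R M : Type*} [Fintype ι] [Ring R]
    [AddCommGroup M] [Module R M] {v : ι → M} (hv : LinearIndependent R v) (g : ι → R) :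
    ∑ i, g i • v i = 0 ↔ ∀ i, g i = 0 :=
  ⟨Fintype.linearIndependent_iff.mp hv g, fun h => by simp [h]⟩

theorem bcm_expected_update_critical_points_general
    (n : ℕ) (d : Fin n → Fin n → ℝ) (hd : LinearIndependent ℝ d)
    (α : Fin n → ℝ) (hα : ∀ k, 0 < α k)
    (m : Fin n → ℝ) :
    (∑ k, (α k * ((m ⬝ᵥ d k) *
        ((m ⬝ᵥ d k) - ∑ j, α j * (m ⬝ᵥ d j) ^ 2))) • d k) = 0 ↔
      ∃ S : Finset (Fin n),
        (∀ k ∈ S, m ⬝ᵥ d k = (∑ i ∈ S, α i)⁻¹) ∧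
        (∀ k ∉ S, m ⬝ᵥ d k = 0) := by
  rw [hd.sum_smul_eq_zero_iff, ← forall_eq_zero_or_eq_sum_mul_sq_iff (c := fun k => m ⬝ᵥ d k)]
  refine forall_congr' fun k => ?_
  simp only [mul_eq_zero, (hα k).ne', sub_eq_zero, false_or]

/-- **Critical points of the expected BCM update.**
With `K = n`, linearly independent `d k`, and `α k > 0` summing to `1`, the
expected BCM update `h(m) = ∑ k, α k c k (c k − θ) • d k` (with
`c k = ⟨m, d k⟩` and `θ = ∑ k, α k c k²`) vanishes iff there is a subset `S`
of the classes with `c k = (∑_{i ∈ S} α i)⁻¹` on `S` and `c k = 0` off `S`. -/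
theorem bcm_expected_update_critical_points
    (n : ℕ) (d : Fin n → Fin n → ℝ) (hd : LinearIndependent ℝ d)
    (α : Fin n → ℝ) (hα : ∀ k, 0 < α k) (hαsum : ∑ k, α k = 1)
    (m : Fin n → ℝ) :
    (∑ k, (α k * ((m ⬝ᵥ d k) *
        ((m ⬝ᵥ d k) - ∑ j, α j * (m ⬝ᵥ d j) ^ 2))) • d k) = 0 ↔
      ∃ S : Finset (Fin n),
        (∀ k ∈ S, m ⬝ᵥ d k = (∑ i ∈ S, α i)⁻¹) ∧
        (∀ k ∉ S, m ⬝ᵥ d k = 0) :=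
  bcm_expected_update_critical_points_general n d hd α hα m
end

section
/- (Jacobian of the BCM update at a critical point.) Let α_1, …, α_K > 0 with Σ_k α_k = 1. For c ∈ ℝ^K define Φ(c) ∈ ℝ^K by Φ_k(c) = c_k(c_k − θ(c)) with θ(c) = Σ_j α_j c_j². Let S ⊆ {1, …, K} be nonempty, β = (Σ_{i∈S} α_i)^{-1}, and let c* ∈ ℝ^K be given by c*_k = β for k ∈ S and c*_k = 0 for k ∉ S. Then the Jacobian matrix of Φ at c* equals β I_S − β I_{S^c} − 2β² diag(α) 𝟙_S 𝟙_Sᵀ, where I_S is the diagonal 0/1 matrix with (I_S)_{ii} = 1 iff i ∈ S, diag(α) is the diagonal matrix with entries α_i, and 𝟙_S ∈ ℝ^K is the indicator vector of S. -/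
/-!
The map `Φ` is polynomial, so its Jacobian at any point `c` is
`diag(2c − θ(c)) − 2 diag(α) c cᵀ`. At `c* = β 𝟙_S` with `β = (∑_{i∈S} α i)⁻¹` one has
`θ(c*) = β² ∑_{i∈S} α i = β`, so the diagonal part is `β` on `S` and `−β` off `S`,
and `c* c*ᵀ = β² 𝟙_S 𝟙_Sᵀ`.
-/

open Matrix

variable {ι : Type*} [Fintype ι]

noncomputable def bcmThreshold (α c : ι → ℝ) : ℝ := ∑ j, α j * c j ^ 2

noncomputable def bcmMap (α c : ι → ℝ) : ι → ℝ := fun k => c k * (c k - bcmThreshold α c)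

/-- Row `i`, column `k` is `∂(bcmMap α) k / ∂c i`, matching `Matrix.vecMulLinear`. -/
noncomputable def bcmJacobian [DecidableEq ι] (α c : ι → ℝ) : Matrix ι ι ℝ :=
  diagonal (fun k => 2 * c k - bcmThreshold α c) - (2 : ℝ) • (diagonal α * vecMulVec c c)

theorem hasFDerivAt_bcmThreshold (α c : ι → ℝ) :
    HasFDerivAt (bcmThreshold α)
      (∑ j, (2 * α j * c j) • (ContinuousLinearMap.proj j : (ι → ℝ) →L[ℝ] ℝ)) c := by
  refine HasFDerivAt.fun_sum fun j _ => ?_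
  have hsq := ((hasFDerivAt_apply (𝕜 := ℝ) j c).pow 2).const_mul (α j)
  refine hsq.congr_fderiv (ContinuousLinearMap.ext fun v => ?_)
  simp only [_root_.smul_apply, ContinuousLinearMap.proj_apply, smul_eq_mul]
  push_cast
  ring

theorem hasFDerivAt_bcmMap [DecidableEq ι] (α c : ι → ℝ) :
    HasFDerivAt (bcmMap α)
      (LinearMap.toContinuousLinearMap (vecMulLinear (bcmJacobian α c))) c := by
  refine hasFDerivAt_pi'' fun k => ?_
  have hk := hasFDerivAt_apply (𝕜 := ℝ) k c
  have hΦk := hk.fun_mul (hk.fun_sub (hasFDerivAt_bcmThreshold α c))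
  refine hΦk.congr_fderiv (ContinuousLinearMap.ext fun v => ?_)
  simp only [ContinuousLinearMap.comp_apply, LinearMap.coe_toContinuousLinearMap',
    vecMulLinear_apply, ContinuousLinearMap.proj_apply, _root_.add_apply,
    _root_.smul_apply, _root_.sub_apply,
    _root_.sum_apply, smul_eq_mul, bcmJacobian, vecMul, dotProduct,
    Matrix.sub_apply, Matrix.smul_apply, diagonal_mul, vecMulVec_apply, diagonal_apply, mul_sub,
    Finset.sum_sub_distrib, mul_ite, mul_zero, Finset.sum_ite_eq', Finset.mem_univ, if_true,
    Finset.mul_sum]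
  rw [Finset.sum_congr rfl fun i _ => (by ring : c k * (2 * α i * c i * v i) =
    v i * (2 * (α i * (c i * c k))))]
  ring

theorem bcmThreshold_ite_mem [DecidableEq ι] (α : ι → ℝ) (S : Finset ι) {β : ℝ}
    (hβ : β = (∑ i ∈ S, α i)⁻¹) :
    bcmThreshold α (fun k => if k ∈ S then β else 0) = β := by
  simp only [bcmThreshold, apply_ite (· ^ 2), mul_ite, ne_eq, OfNat.ofNat_ne_zero,
    not_false_eq_true, zero_pow, mul_zero, Finset.sum_ite_mem, Finset.univ_inter,
    ← Finset.sum_mul]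
  rcases eq_or_ne (∑ i ∈ S, α i) 0 with hs | hs
  · simp [hβ, hs]
  · rw [hβ]
    field_simp

theorem bcmJacobian_ite_mem [DecidableEq ι] (α : ι → ℝ) (S : Finset ι) {β : ℝ}
    (hβ : β = (∑ i ∈ S, α i)⁻¹) :
    bcmJacobian α (fun k => if k ∈ S then β else 0) =
      β • diagonal (fun k => if k ∈ S then 1 else 0) -
        β • diagonal (fun k => if k ∈ S then 0 else 1) -
        (2 * β ^ 2) • (diagonal α *
          vecMulVec (fun k => if k ∈ S then 1 else 0) (fun k => if k ∈ S then 1 else 0)) := by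
  ext i k
  simp only [bcmJacobian, bcmThreshold_ite_mem α S hβ, Matrix.sub_apply, Matrix.smul_apply,
    diagonal_mul, vecMulVec_apply, diagonal_apply, smul_eq_mul]
  split_ifs <;> ring

theorem bcm_jacobian_at_critical_point_general
    (K : ℕ) (α : Fin K → ℝ)
    (Φ : (Fin K → ℝ) → (Fin K → ℝ))
    (hΦ : ∀ c k, Φ c k = c k * (c k - ∑ j, α j * c j ^ 2))
    (S : Finset (Fin K))
    (β : ℝ) (hβ : β = (∑ i ∈ S, α i)⁻¹)
    (cstar : Fin K → ℝ)
    (hcstar : ∀ k, cstar k = if k ∈ S then β else 0)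
    (oneS : Fin K → ℝ) (honeS : ∀ k, oneS k = if k ∈ S then 1 else 0)
    (IS ISc : Matrix (Fin K) (Fin K) ℝ)
    (hIS : IS = Matrix.diagonal oneS)
    (hISc : ISc = Matrix.diagonal (fun k => if k ∈ S then 0 else 1)) :
    HasFDerivAt Φ
      (LinearMap.toContinuousLinearMap (Matrix.vecMulLinear
        (β • IS - β • ISc -
          (2 * β ^ 2) • (Matrix.diagonal α * vecMulVec oneS oneS))))
      cstar := by
  have hΦ_eq : Φ = bcmMap α := funext fun c => funext (hΦ c)
  obtain rfl : cstar = fun k => if k ∈ S then β else 0 := funext hcstar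
  obtain rfl : oneS = fun k => if k ∈ S then 1 else 0 := funext honeS
  subst hΦ_eq hIS hISc
  rw [← bcmJacobian_ite_mem α S hβ]
  exact hasFDerivAt_bcmMap α _

/-- **Jacobian of the BCM nonlinearity at a critical point.**
With `Φ k (c) = c k (c k − θ(c))`, `θ(c) = ∑ j, α j c j²`, `S` nonempty,
`β = (∑_{i∈S} α i)⁻¹` and `c*` equal to `β` on `S` and `0` off `S`, the
Jacobian matrix of `Φ` at `c*` is `β I_S − β I_{Sᶜ} − 2β² diag(α) 𝟙_S 𝟙_Sᵀ`
(so that the derivative of `Φ` at `c*` in direction `v` is `v ᵥ* J`,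
i.e. `J k j = ∂Φ j / ∂c k`, the convention under which the displayed
matrix is the Jacobian). -/
theorem bcm_jacobian_at_critical_point
    (K : ℕ) (α : Fin K → ℝ) (hα : ∀ k, 0 < α k) (hαsum : ∑ k, α k = 1)
    (Φ : (Fin K → ℝ) → (Fin K → ℝ))
    (hΦ : ∀ c k, Φ c k = c k * (c k - ∑ j, α j * c j ^ 2))
    (S : Finset (Fin K)) (hS : S.Nonempty)
    (β : ℝ) (hβ : β = (∑ i ∈ S, α i)⁻¹)
    (cstar : Fin K → ℝ)
    (hcstar : ∀ k, cstar k = if k ∈ S then β else 0)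
    (oneS : Fin K → ℝ) (honeS : ∀ k, oneS k = if k ∈ S then 1 else 0)
    (IS ISc : Matrix (Fin K) (Fin K) ℝ)
    (hIS : IS = Matrix.diagonal oneS)
    (hISc : ISc = Matrix.diagonal (fun k => if k ∈ S then 0 else 1)) :
    HasFDerivAt Φ
      (LinearMap.toContinuousLinearMap (Matrix.vecMulLinear
        (β • IS - β • ISc -
          (2 * β ^ 2) • (Matrix.diagonal α * vecMulVec oneS oneS))))
      cstar :=
  bcm_jacobian_at_critical_point_general K α Φ hΦ S β hβ cstar hcstar oneS honeS IS ISc hIS hISc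
end

section
/- Let α_1, …, α_K > 0, let S ⊆ {1, …, K} with |S| ≥ 2, suppose the values {α_i : i ∈ S} are not all equal, and set β = (Σ_{i∈S} α_i)^{-1}. Then the matrix A = I_S − 2β diag(α) 𝟙_S 𝟙_Sᵀ is not negative semidefinite: for j ∈ S minimizing α_j over S, one has 2βα_j < 1 and hence e_jᵀ A e_j = 1 − 2βα_j > 0. Consequently the critical points of the expected BCM update whose support S has size at least 2 are not stable. -/
/-! The minimum `α j` over `S` is strictly below some other `α i` with `i ∈ S`, so
`2 α j < α j + α i ≤ ∑_{i∈S} α i`, i.e. `2βα_j < 1`. Since `e_jᵀ A e_j` is the diagonal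
entry `A j j = 1 − 2βα_j`, the quadratic form of `A` is positive at `e_j`. -/

open Matrix

theorem Finset.exists_lt_of_forall_le_of_exists_ne {ι β : Type*} [LinearOrder β] {f : ι → β}
    {S : Finset ι} {j : ι} (hjmin : ∀ i ∈ S, f j ≤ f i) (hne : ∃ a ∈ S, ∃ b ∈ S, f a ≠ f b) :
    ∃ i ∈ S, f j < f i := by
  by_contra! hle
  obtain ⟨a, ha, b, hb, hab⟩ := hne
  exact hab <| (le_antisymm (hle a ha) (hjmin a ha)).trans
    (le_antisymm (hle b hb) (hjmin b hb)).symm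

theorem Finset.two_mul_lt_sum_of_lt {ι R : Type*} [DecidableEq ι] [CommRing R] [LinearOrder R]
    [IsStrictOrderedRing R] {f : ι → R} {S : Finset ι}
    (hf : ∀ i ∈ S, 0 ≤ f i) {i j : ι} (hi : i ∈ S) (hj : j ∈ S) (hlt : f j < f i) :
    2 * f j < ∑ k ∈ S, f k := by
  have hij : j ≠ i := fun h => hlt.ne (congrArg f h)
  have hpair : f j + f i ≤ ∑ k ∈ S, f k := by
    rw [← Finset.sum_pair hij]
    exact Finset.sum_le_sum_of_subset_of_nonneg (Finset.insert_subset hj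
      (Finset.singleton_subset_iff.mpr hi)) fun k hk _ => hf k hk
  linarith

theorem Matrix.single_one_dotProduct_mulVec_single_one {n R : Type*} [Fintype n]
    [DecidableEq n] [NonAssocSemiring R] (A : Matrix n n R) (j : n) :
    Pi.single j 1 ⬝ᵥ A *ᵥ Pi.single j 1 = A j j := by
  rw [single_one_dotProduct, mulVec_single_one, col_apply]

theorem nonselective_critical_points_unstable_general
    (K : ℕ) (α : Fin K → ℝ) (hα : ∀ k, 0 < α k)
    (S : Finset (Fin K))
    (hne : ∃ i ∈ S, ∃ j ∈ S, α i ≠ α j)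
    (β : ℝ) (hβ : β = (∑ i ∈ S, α i)⁻¹)
    (oneS : Fin K → ℝ) (honeS : ∀ k, oneS k = if k ∈ S then 1 else 0)
    (A : Matrix (Fin K) (Fin K) ℝ)
    (hA : A = Matrix.diagonal oneS -
      (2 * β) • (Matrix.diagonal α * vecMulVec oneS oneS))
    (j : Fin K) (hj : j ∈ S) (hjmin : ∀ i ∈ S, α j ≤ α i) :
    2 * β * α j < 1 ∧
    (Pi.single j 1 ⬝ᵥ A.mulVec (Pi.single j 1)) = 1 - 2 * β * α j ∧
    0 < (Pi.single j 1 ⬝ᵥ A.mulVec (Pi.single j 1)) ∧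
    ¬ (∀ v : Fin K → ℝ, v ⬝ᵥ A.mulVec v ≤ 0) := by
  obtain ⟨i, hi, hlt⟩ := Finset.exists_lt_of_forall_le_of_exists_ne hjmin hne
  have hsum : 2 * α j < ∑ k ∈ S, α k :=
    Finset.two_mul_lt_sum_of_lt (fun k _ => (hα k).le) hi hj hlt
  have hsmall : 2 * β * α j < 1 := by
    rw [hβ, mul_right_comm, ← div_eq_mul_inv, div_lt_one (by linarith [hα j])]
    exact hsum
  have hdiag : Pi.single j 1 ⬝ᵥ A *ᵥ Pi.single j 1 = 1 - 2 * β * α j := by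
    rw [single_one_dotProduct_mulVec_single_one, hA]
    simp [diagonal_mul, vecMulVec_apply, honeS, hj]
  refine ⟨hsmall, hdiag, by linarith, fun hnsd => ?_⟩
  linarith [hnsd (Pi.single j 1)]

/-- **Non-selective critical points are unstable.**
For `S` with at least two elements on which the `α i` are not all equal, and
`β = (∑_{i∈S} α i)⁻¹`, the matrix `A = I_S − 2β diag(α) 𝟙_S 𝟙_Sᵀ` is not
negative semidefinite: for `j ∈ S` minimizing `α` over `S` one has
`2βα_j < 1`, `e_jᵀ A e_j = 1 − 2βα_j`, and hence `e_jᵀ A e_j > 0`. -/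
theorem nonselective_critical_points_unstable
    (K : ℕ) (α : Fin K → ℝ) (hα : ∀ k, 0 < α k)
    (S : Finset (Fin K)) (hScard : 2 ≤ S.card)
    (hne : ∃ i ∈ S, ∃ j ∈ S, α i ≠ α j)
    (β : ℝ) (hβ : β = (∑ i ∈ S, α i)⁻¹)
    (oneS : Fin K → ℝ) (honeS : ∀ k, oneS k = if k ∈ S then 1 else 0)
    (A : Matrix (Fin K) (Fin K) ℝ)
    (hA : A = Matrix.diagonal oneS -
      (2 * β) • (Matrix.diagonal α * vecMulVec oneS oneS))
    (j : Fin K) (hj : j ∈ S) (hjmin : ∀ i ∈ S, α j ≤ α i) :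
    2 * β * α j < 1 ∧
    (Pi.single j 1 ⬝ᵥ A.mulVec (Pi.single j 1)) = 1 - 2 * β * α j ∧
    0 < (Pi.single j 1 ⬝ᵥ A.mulVec (Pi.single j 1)) ∧
    ¬ (∀ v : Fin K → ℝ, v ⬝ᵥ A.mulVec v ≤ 0) :=
  nonselective_critical_points_unstable_general K α hα S hne β hβ oneS honeS A hA j hj hjmin
end

section
/- Let K = n, let d_1, …, d_K ∈ ℝ^n be linearly independent, let α_1, …, α_K > 0 with Σ_k α_k = 1, and let Φ(c)_k = c_k(c_k − Σ_j α_j c_j²). Fix i and let c* = α_i^{-1} e_i. Then the Jacobian of Φ at c* equals −α_i^{-1} I_K, and consequently the Jacobian of the expected BCM update H = Dᵀ P (∂Φ/∂c) D evaluated at the corresponding weight vector m* = α_i^{-1} D^{-1} e_i equals −α_i^{-1} Dᵀ P D, which is negative definite. Hence each selective critical point c* = α_i^{-1} e_i is a stable point of the expected BCM update. -/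
/-!
With `s(c) = ∑ⱼ αⱼ cⱼ²`, the Jacobian of `Φ` at `c` is `diag(2c - s(c)) - c (2 α ∘ c)ᵀ`. At
`c* = αᵢ⁻¹ eᵢ` we have `s(c*) = αᵢ⁻¹` and the rank-one term only touches the `(i, i)` entry,
so the Jacobian is `-αᵢ⁻¹ I`. As `D` is invertible (its rows are independent) and `P` is a
positive diagonal matrix, `Dᵀ P D` is positive definite, hence `-αᵢ⁻¹ Dᵀ P D` is negative definite.
-/

open Matrix

section

variable {ι : Type*} [Fintype ι]

def bcmPhi (α c : ι → ℝ) : ι → ℝ := fun k => c k * (c k - ∑ j, α j * c j ^ 2)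

def bcmPhiJacobian [DecidableEq ι] (α c : ι → ℝ) : Matrix ι ι ℝ :=
  diagonal (fun k => 2 * c k - ∑ j, α j * c j ^ 2) - vecMulVec c (fun j => 2 * α j * c j)

theorem hasFDerivAt_weighted_sum_sq (α c : ι → ℝ) :
    HasFDerivAt (fun c : ι → ℝ => ∑ j, α j * c j ^ 2)
      (∑ j, (2 * α j * c j) • ContinuousLinearMap.proj (R := ℝ) (φ := fun _ : ι => ℝ) j) c := by
  refine HasFDerivAt.fun_sum fun j _ => ?_
  refine (((hasFDerivAt_apply (𝕜 := ℝ) j c).pow 2).const_mul (α j)).congr_fderiv ?_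
  ext v
  simp
  ring

theorem hasFDerivAt_bcmPhi [DecidableEq ι] (α c : ι → ℝ) :
    HasFDerivAt (bcmPhi α) (mulVecLin (bcmPhiJacobian α c)).toContinuousLinearMap c := by
  refine hasFDerivAt_pi'.2 fun k => ?_
  have hk := hasFDerivAt_apply (𝕜 := ℝ) k c
  refine (hk.mul (hk.sub (hasFDerivAt_weighted_sum_sq α c))).congr_fderiv ?_
  ext v
  simp [bcmPhiJacobian, mulVec_diagonal, vecMulVec_mulVec, dotProduct]
  ring_nf

theorem bcmPhiJacobian_selective [DecidableEq ι] {α : ι → ℝ} {i : ι} (hαi : α i ≠ 0) :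
    bcmPhiJacobian α ((α i)⁻¹ • Pi.single i 1) = -(α i)⁻¹ • 1 := by
  set c : ι → ℝ := (α i)⁻¹ • Pi.single i 1
  have hc : ∀ k, c k = if k = i then (α i)⁻¹ else 0 := fun k => by
    by_cases hk : k = i <;> simp [c, hk]
  have hsum : ∑ j, α j * c j ^ 2 = (α i)⁻¹ := by
    rw [Finset.sum_eq_single i (fun j _ hj => by simp [hc, hj]) (by simp), hc, if_pos rfl]
    field_simp
  rw [bcmPhiJacobian, hsum]
  ext k l
  simp only [Matrix.sub_apply, diagonal_apply, vecMulVec_apply, Matrix.smul_apply, one_apply, hc]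
  by_cases hki : k = i <;> by_cases hli : l = i
  · simp only [hki, hli, if_true]
    linear_combination (-2 * (α i)⁻¹) * mul_inv_cancel₀ hαi
  all_goals simp_all [eq_comm]

theorem posDef_transpose_mul_diagonal_mul {κ : Type*} [Fintype κ] [DecidableEq κ] {α : κ → ℝ}
    (hα : ∀ k, 0 < α k) {D : Matrix κ ι ℝ} (hD : Function.Injective D.mulVec) :
    (Dᵀ * diagonal α * D).PosDef := by
  simpa using (PosDef.diagonal hα).conjTranspose_mul_mul_same hD

end

theorem bcm_selective_points_stable_general
    (n : ℕ) (d : Fin n → Fin n → ℝ) (hd : LinearIndependent ℝ d)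
    (α : Fin n → ℝ) (hα : ∀ k, 0 < α k)
    (Φ : (Fin n → ℝ) → (Fin n → ℝ))
    (hΦ : ∀ c k, Φ c k = c k * (c k - ∑ j, α j * c j ^ 2))
    (D : Matrix (Fin n) (Fin n) ℝ) (hD : D = Matrix.of d)
    (P : Matrix (Fin n) (Fin n) ℝ) (hP : P = Matrix.diagonal α)
    (i : Fin n)
    (cstar : Fin n → ℝ) (hcstar : cstar = (α i)⁻¹ • (Pi.single i 1 : Fin n → ℝ))
    (mstar : Fin n → ℝ) (hmstar : mstar = (α i)⁻¹ • D⁻¹.mulVec (Pi.single i 1)) :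
    HasFDerivAt Φ
      (LinearMap.toContinuousLinearMap (Matrix.mulVecLin
        (-(α i)⁻¹ • (1 : Matrix (Fin n) (Fin n) ℝ)))) cstar ∧
    D.mulVec mstar = cstar ∧
    Dᵀ * P * (-(α i)⁻¹ • (1 : Matrix (Fin n) (Fin n) ℝ)) * D =
      -(α i)⁻¹ • (Dᵀ * P * D) ∧
    (∀ v : Fin n → ℝ, v ≠ 0 →
      v ⬝ᵥ (-(α i)⁻¹ • (Dᵀ * P * D)).mulVec v < 0) := by
  have hDunit : IsUnit D := hD ▸ linearIndependent_rows_iff_isUnit.mp hd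
  subst hP hcstar hmstar
  refine ⟨?_, ?_, by simp, fun v hv => ?_⟩
  · rw [show Φ = bcmPhi α from funext fun c => funext (hΦ c),
      ← bcmPhiJacobian_selective (hα i).ne']
    exact hasFDerivAt_bcmPhi α _
  · rw [mulVec_smul, mulVec_mulVec, mul_nonsing_inv _ ((isUnit_iff_isUnit_det D).mp hDunit),
      one_mulVec]
  · have hpos := (posDef_transpose_mul_diagonal_mul hα
      (mulVec_injective_iff_isUnit.2 hDunit)).dotProduct_mulVec_pos hv
    rw [smul_mulVec, dotProduct_smul, smul_eq_mul, neg_mul, neg_lt_zero]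
    exact mul_pos (inv_pos.2 (hα i)) (by simpa using hpos)

/-- **Selective critical points are stable.**
With `K = n`, linearly independent rows `d k` of `D`, `P = diag α`, and
`c* = α_i⁻¹ e_i`, the Jacobian of `Φ` at `c*` is `−α_i⁻¹ I`, the weight
vector `m* = α_i⁻¹ D⁻¹ e_i` satisfies `D m* = c*`, and the Jacobian of the
expected BCM update `H = Dᵀ P (∂Φ/∂c) D` at `m*` equals `−α_i⁻¹ Dᵀ P D`,
which is negative definite. -/
theorem bcm_selective_points_stable
    (n : ℕ) (d : Fin n → Fin n → ℝ) (hd : LinearIndependent ℝ d)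
    (α : Fin n → ℝ) (hα : ∀ k, 0 < α k) (hαsum : ∑ k, α k = 1)
    (Φ : (Fin n → ℝ) → (Fin n → ℝ))
    (hΦ : ∀ c k, Φ c k = c k * (c k - ∑ j, α j * c j ^ 2))
    (D : Matrix (Fin n) (Fin n) ℝ) (hD : D = Matrix.of d)
    (P : Matrix (Fin n) (Fin n) ℝ) (hP : P = Matrix.diagonal α)
    (i : Fin n)
    (cstar : Fin n → ℝ) (hcstar : cstar = (α i)⁻¹ • (Pi.single i 1 : Fin n → ℝ))
    (mstar : Fin n → ℝ) (hmstar : mstar = (α i)⁻¹ • D⁻¹.mulVec (Pi.single i 1)) :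
    HasFDerivAt Φ
      (LinearMap.toContinuousLinearMap (Matrix.mulVecLin
        (-(α i)⁻¹ • (1 : Matrix (Fin n) (Fin n) ℝ)))) cstar ∧
    D.mulVec mstar = cstar ∧
    Dᵀ * P * (-(α i)⁻¹ • (1 : Matrix (Fin n) (Fin n) ℝ)) * D =
      -(α i)⁻¹ • (Dᵀ * P * D) ∧
    (∀ v : Fin n → ℝ, v ≠ 0 →
      v ⬝ᵥ (-(α i)⁻¹ • (Dᵀ * P * D)).mulVec v < 0) :=
  bcm_selective_points_stable_general n d hd α hα Φ hΦ D hD P hP i cstar hcstar mstar hmstar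
end

section
/- (Deterministic core of Delyon's stochastic approximation theorem.) Let 𝒪 ⊆ ℝ^d be open, let V : 𝒪 → [0, ∞) be continuously differentiable with V(x) → +∞ as x → ∂𝒪 or |x| → ∞, let 𝒦 ⊂ 𝒪 be a finite set, and let h : 𝒪 → ℝ^d be continuous with ⟨∇V(x), h(x)⟩ < 0 for all x ∈ 𝒪 \ 𝒦. Let γ_n > 0 satisfy Σ_n γ_n = ∞ and Σ_n γ_n² < ∞, and let (m_n) ⊂ 𝒪 satisfy m_n = m_{n-1} + γ_n h(m_{n-1}) + γ_n η_n with η_n = e_n + r_n, where the series Σ_n γ_n e_n converges in ℝ^d, r_n → 0, and the sequence (m_n) remains in a fixed compact subset of 𝒪. Then V(m_n) converges to an element of V(𝒦) and dist(m_n, 𝒦) → 0. -/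
open Filter Topology Uniformity Metric Finset RealInnerProductSpace

/-!
Adding to `m n` the tail `∑_{i > n} γ i • e i` of the convergent noise series gives iterates
`x n` with `x n - m n → 0` and `x (n + 1) = x n + γ (n + 1) • u n`, where `u n - h (x n) → 0`.
A first-order Taylor expansion of `V`, uniform on a compact neighbourhood of the trajectory, yields
`V (x (n + 1)) ≤ V (x n) + γ (n + 1) * (⟪∇V, h⟫ (x n) + o(1))`, so away from `K` the value of `V`
drops by a fixed multiple of `γ (n + 1)` at each step. As `∑ γ n = ∞` and `V ≥ 0`, the iterates
come arbitrarily close to `K` infinitely often. For `b ∉ V '' K` the set `{V < b}` is eventually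
invariant, which forces `V (x n)` to converge; then no excursion away from `K` can be paid for,
so `infDist (x n) K → 0`, and since the steps tend to zero and `K` is finite, `x n` converges to
a point of `K`.
-/

theorem tendsto_atBot_of_eventually_le_sub_mul {v γ : ℕ → ℝ} {c : ℝ} (hc : 0 < c)
    (hγ : Tendsto (fun N => ∑ n ∈ range N, γ n) atTop atTop)
    (hv : ∀ᶠ n in atTop, v (n + 1) ≤ v n - c * γ (n + 1)) :
    Tendsto v atTop atBot := by
  obtain ⟨N, hN⟩ := eventually_atTop.1 hv
  have hw : ∀ n ≥ N, v n + c * ∑ i ∈ range (n + 1), γ i ≤ v N + c * ∑ i ∈ range (N + 1), γ i := by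
    intro n hn
    induction n, hn using Nat.le_induction with
    | base => rfl
    | succ n hn ih =>
      rw [sum_range_succ _ (n + 1), mul_add]
      linarith [hN n hn]
  have hlim : Tendsto
      (fun n => v N + c * ∑ i ∈ range (N + 1), γ i + -(c * ∑ i ∈ range (n + 1), γ i)) atTop atBot :=
    tendsto_atBot_add_const_left _ _ (tendsto_neg_atTop_atBot.comp
      ((hγ.comp (tendsto_add_atTop_nat 1)).const_mul_atTop hc))
  refine tendsto_atBot_mono' _ (eventually_atTop.2 ⟨N, fun n hn => ?_⟩) hlim
  linarith [hw n hn]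

theorem Filter.Frequently.eventually_of_imp_succ {P : ℕ → Prop} (hP : ∃ᶠ n in atTop, P n)
    (hinv : ∀ᶠ n in atTop, P n → P (n + 1)) : ∀ᶠ n in atTop, P n := by
  obtain ⟨N, hN⟩ := eventually_atTop.1 hinv
  obtain ⟨p, hpN, hp⟩ := frequently_atTop.1 hP N
  refine eventually_atTop.2 ⟨p, fun n hn => ?_⟩
  induction n, hn using Nat.le_induction with
  | base => exact hp
  | succ n hn ih => exact hN n (hpN.trans hn) ih

theorem exists_tendsto_of_eventually_lt_or_eventually_le {α : Type*} {l : Filter α} [l.NeBot]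
    {v : α → ℝ} {S : Set ℝ} (hS : S.Finite) {a b : ℝ} (ha : ∀ᶠ n in l, a ≤ v n)
    (hb : ∀ᶠ n in l, v n ≤ b) (h : ∀ c ∉ S, (∀ᶠ n in l, v n < c) ∨ ∀ᶠ n in l, c ≤ v n) :
    ∃ L, Tendsto v l (𝓝 L) := by
  set A := {c | ∀ᶠ n in l, c ≤ v n}
  have hAb : BddAbove A := ⟨b, fun c hc => by
    obtain ⟨n, hcn, hnb⟩ := (hc.and hb).exists
    exact hcn.trans hnb⟩
  refine ⟨sSup A, tendsto_order.2 ⟨fun c hc => ?_, fun c hc => ?_⟩⟩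
  · obtain ⟨c', hc'A, hcc'⟩ := exists_lt_of_lt_csSup ⟨a, ha⟩ hc
    exact hc'A.mono fun n hn => hcc'.trans_le hn
  · obtain ⟨c', ⟨hLc', hc'c⟩, hc'S⟩ := ((Set.Ioo_infinite hc).sdiff hS).nonempty
    exact ((h c' hc'S).resolve_right (notMem_of_csSup_lt (s := A) hLc' hAb)).mono
      fun n hn => hn.trans hc'c

theorem IsCompact.exists_thickening_subset_preimage {X Y : Type*} [PseudoMetricSpace X]
    [TopologicalSpace Y] {K : Set X} (hK : IsCompact K) {f : X → Y}
    (hf : ∀ k ∈ K, ContinuousAt f k) {U : Set Y} (hU : IsOpen U) (hKU : Set.MapsTo f K U) :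
    ∃ ε > 0, thickening ε K ⊆ f ⁻¹' U :=
  (hasBasis_nhdsSet_thickening hK).mem_iff.1
    (mem_nhdsSet_iff_forall.2 fun k hk => hf k hk (hU.mem_nhds (hKU hk)))

theorem Set.Finite.exists_pos_forall_lt_dist {X : Type*} [MetricSpace X] {K : Set X}
    (hK : K.Finite) : ∃ ρ > 0, ∀ k ∈ K, ∀ k' ∈ K, k ≠ k' → ρ < dist k k' := by
  have : ∀ᶠ ρ in 𝓝[>] (0 : ℝ), ∀ k ∈ K, ∀ k' ∈ K, k ≠ k' → ρ < dist k k' :=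
    hK.eventually_all.2 fun k _ => hK.eventually_all.2 fun k' _ =>
      eventually_imp_distrib_left.2 fun hne =>
        nhdsWithin_le_nhds (eventually_lt_nhds (dist_pos.2 hne))
  obtain ⟨ρ, hρ, hρpos⟩ := (this.and self_mem_nhdsWithin).exists
  exact ⟨ρ, hρpos, hρ⟩

section Descent

variable {E : Type*} [MetricSpace E] {K : Set E} {V : E → ℝ} {x : ℕ → E} {γ : ℕ → ℝ}

def DecreasesAwayFrom (K : Set E) (V : E → ℝ) (x : ℕ → E) (γ : ℕ → ℝ) : Prop :=
  ∀ ε > 0, ∃ c > 0, ∀ᶠ n in atTop, x n ∉ thickening ε K → V (x (n + 1)) ≤ V (x n) - c * γ (n + 1)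

theorem frequently_mem_thickening_of_decreasesAwayFrom (hVnn : ∀ᶠ n in atTop, 0 ≤ V (x n))
    (hγsum : Tendsto (fun N => ∑ n ∈ range N, γ n) atTop atTop) (hdec : DecreasesAwayFrom K V x γ)
    {ε : ℝ} (hε : 0 < ε) : ∃ᶠ n in atTop, x n ∈ thickening ε K := by
  intro hfar
  obtain ⟨c, hc, hcdec⟩ := hdec ε hε
  have hbot := tendsto_atBot_of_eventually_le_sub_mul (v := fun n => V (x n)) hc hγsum
    ((hcdec.and hfar).mono fun n hn => hn.1 hn.2)
  obtain ⟨n, hn, hn'⟩ := (hVnn.and (hbot.eventually_lt_atBot 0)).exists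
  exact hn'.not_ge hn

theorem eventually_lt_imp_succ_lt (hK : K.Finite) (hVK : ∀ k ∈ K, ContinuousAt V k)
    (hγ : ∀ n, 0 ≤ γ n) (hinc : ∀ θ > 0, ∀ᶠ n in atTop, V (x (n + 1)) ≤ V (x n) + θ)
    (hdec : DecreasesAwayFrom K V x γ) {b : ℝ} (hb : b ∉ V '' K) :
    ∀ᶠ n in atTop, V (x n) < b → V (x (n + 1)) < b := by
  obtain ⟨θ, hθ, hθb⟩ := Metric.isOpen_iff.1 (hK.image V).isClosed.isOpen_compl b hb
  obtain ⟨ε, hε, hεK⟩ := hK.isCompact.exists_thickening_subset_preimage hVK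
    isClosed_closedBall.isOpen_compl fun k hk hkb =>
      hθb (closedBall_subset_ball (half_lt_self hθ) hkb) (Set.mem_image_of_mem V hk)
  obtain ⟨c, hc, hcdec⟩ := hdec ε hε
  filter_upwards [hinc (θ / 2) (half_pos hθ), hcdec] with n hinc_n hdec_n hlt
  by_cases hxn : x n ∈ thickening ε K
  · have hfar : θ / 2 < |V (x n) - b| := not_le.1 (hεK hxn)
    rw [abs_of_neg (sub_neg.2 hlt)] at hfar
    linarith
  · nlinarith [hdec_n hxn, mul_nonneg hc.le (hγ (n + 1))]

theorem exists_tendsto_comp_of_decreasesAwayFrom (hK : K.Finite)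
    (hVK : ∀ k ∈ K, ContinuousAt V k) (hVnn : ∀ᶠ n in atTop, 0 ≤ V (x n)) (hγ : ∀ n, 0 ≤ γ n)
    (hinc : ∀ θ > 0, ∀ᶠ n in atTop, V (x (n + 1)) ≤ V (x n) + θ)
    (hdec : DecreasesAwayFrom K V x γ) (hfreq : ∀ ε > 0, ∃ᶠ n in atTop, x n ∈ thickening ε K) :
    ∃ L, Tendsto (fun n => V (x n)) atTop (𝓝 L) := by
  have hinv := fun b (hb : b ∉ V '' K) => eventually_lt_imp_succ_lt hK hVK hγ hinc hdec hb
  obtain ⟨M, hM⟩ := (hK.image V).bddAbove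
  have hM1 : M + 1 ∉ V '' K := fun h => by linarith [hM h]
  obtain ⟨ε, hε, hεK⟩ := hK.isCompact.exists_thickening_subset_preimage hVK isOpen_Iio
    fun k hk => (hM (Set.mem_image_of_mem V hk)).trans_lt (lt_add_one M)
  have hup : ∀ᶠ n in atTop, V (x n) < M + 1 :=
    ((hfreq ε hε).mono fun n hn => hεK hn).eventually_of_imp_succ (hinv _ hM1)
  refine exists_tendsto_of_eventually_lt_or_eventually_le (hK.image V) hVnn
    (hup.mono fun n => le_of_lt) fun b hb => ?_
  by_cases hfb : ∃ᶠ n in atTop, V (x n) < b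
  · exact .inl (hfb.eventually_of_imp_succ (hinv b hb))
  · exact .inr ((not_frequently.1 hfb).mono fun n => le_of_not_gt)

theorem eventually_mem_thickening_of_decreasesAwayFrom {L C : ℝ}
    (hL : Tendsto (fun n => V (x n)) atTop (𝓝 L)) (hγ0 : Tendsto γ atTop (𝓝 0)) (hC : 0 < C)
    (hstep : ∀ᶠ n in atTop, dist (x (n + 1)) (x n) ≤ C * γ (n + 1))
    (hdec : DecreasesAwayFrom K V x γ) (hfreq : ∀ ε > 0, ∃ᶠ n in atTop, x n ∈ thickening ε K)
    {β : ℝ} (hβ : 0 < β) : ∀ᶠ n in atTop, x n ∈ thickening β K := by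
  obtain ⟨_, hx⟩ := (hfreq β hβ).exists
  obtain ⟨k, hk, -⟩ := mem_thickening_iff.1 hx
  have hKne : K.Nonempty := ⟨k, hk⟩
  simp only [mem_thickening_iff_infDist_lt hKne] at hfreq ⊢
  obtain ⟨c, hc, hcdec⟩ := hdec (β / 3) (by positivity)
  simp only [mem_thickening_iff_infDist_lt hKne, not_lt] at hcdec
  set κ := c / C
  have hκ0 : 0 < κ := div_pos hc hC
  have hκC : κ * C = c := div_mul_cancel₀ c hC.ne'
  have hclose : ∀ᶠ n in atTop, |V (x n) - L| < κ * β / 6 :=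
    (Metric.tendsto_nhds.1 hL (κ * β / 6) (by positivity)).mono fun n hn => by rwa [← Real.dist_eq]
  have hγ1 : Tendsto (fun n => C * γ (n + 1)) atTop (𝓝 0) := by
    simpa using (hγ0.comp (tendsto_add_atTop_nat 1)).const_mul C
  -- Away from `K` the potential `V + κ * infDist · K` is nonincreasing: the drop of `V` pays
  -- for the displacement. Reaching distance `β` would cost more than the oscillation of `V`.
  have hinv : ∀ᶠ n in atTop, (infDist (x n) K < β / 3 ∨
      V (x n) + κ * infDist (x n) K < L + 5 * κ * β / 6) →
      (infDist (x (n + 1)) K < β / 3 ∨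
      V (x (n + 1)) + κ * infDist (x (n + 1)) K < L + 5 * κ * β / 6) := by
    filter_upwards [hstep, hγ1.eventually_lt_const (by positivity : (0 : ℝ) < β / 3), hcdec,
      (tendsto_add_atTop_nat 1).eventually hclose] with n hstep_n hγ_n hdec_n hclose_n hP
    have hd : infDist (x (n + 1)) K ≤ infDist (x n) K + C * γ (n + 1) :=
      infDist_le_infDist_add_dist.trans (by linarith)
    have hκd : κ * infDist (x (n + 1)) K ≤ κ * infDist (x n) K + c * γ (n + 1) := by
      rw [← hκC, mul_assoc, ← mul_add]
      exact mul_le_mul_of_nonneg_left hd hκ0.le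
    rcases lt_or_ge (infDist (x (n + 1)) K) (β / 3) with h1 | h1
    · exact .inl h1
    refine .inr ?_
    rcases lt_or_ge (infDist (x n) K) (β / 3) with h0 | h0
    · have : κ * infDist (x (n + 1)) K < κ * (2 * β / 3) :=
        mul_lt_mul_of_pos_left (by linarith) hκ0
      linarith [(abs_lt.1 hclose_n).2]
    · linarith [hdec_n h0, hP.resolve_left h0.not_gt]
  have hP := ((hfreq (β / 3) (by positivity)).mono fun n => Or.inl).eventually_of_imp_succ hinv
  filter_upwards [hP, hclose] with n hPn hclose_n
  rcases hPn with h | h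
  · linarith
  · refine lt_of_mul_lt_mul_left ?_ hκ0.le
    linarith [(abs_lt.1 hclose_n).1]

theorem exists_tendsto_of_eventually_mem_thickening (hK : K.Finite)
    (hstep : Tendsto (fun n => dist (x (n + 1)) (x n)) atTop (𝓝 0))
    (hx : ∀ ε > 0, ∀ᶠ n in atTop, x n ∈ thickening ε K) : ∃ k ∈ K, Tendsto x atTop (𝓝 k) := by
  obtain ⟨ρ, hρ, hsep⟩ := hK.exists_pos_forall_lt_dist
  obtain ⟨N, hN⟩ := eventually_atTop.1 ((hx (ρ / 3) (by positivity)).and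
    (hstep.eventually_lt_const (by positivity : (0 : ℝ) < ρ / 3)))
  obtain ⟨k, hk, hNk⟩ := mem_thickening_iff.1 (hN N le_rfl).1
  have hunique : ∀ y, ∀ k' ∈ K, dist y k' < ρ / 3 → dist y k < 2 * ρ / 3 → k' = k := by
    intro y k' hk' h1 h2
    by_contra hne
    linarith [hsep k' hk' k hk hne, dist_triangle_left k' k y]
  have hstay : ∀ n ≥ N, dist (x n) k < ρ / 3 := by
    intro n hn
    induction n, hn using Nat.le_induction with
    | base => exact hNk
    | succ n hn ih =>
      obtain ⟨k', hk', hk'd⟩ := mem_thickening_iff.1 (hN (n + 1) (by omega)).1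
      obtain rfl := hunique _ k' hk' hk'd
        (by linarith [dist_triangle (x (n + 1)) (x n) k, (hN n hn).2])
      exact hk'd
  refine ⟨k, hk, Metric.tendsto_atTop.2 fun ε hε => ?_⟩
  obtain ⟨M, hM⟩ := eventually_atTop.1 (hx (min ε (ρ / 3)) (by positivity))
  refine ⟨max M N, fun n hn => ?_⟩
  obtain ⟨k', hk', hk'd⟩ := mem_thickening_iff.1 (hM n (le_of_max_le_left hn))
  obtain rfl := hunique _ k' hk' (hk'd.trans_le (min_le_right _ _))
    (by linarith [hstay n (le_of_max_le_right hn)])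
  exact hk'd.trans_le (min_le_left _ _)

theorem exists_tendsto_of_decreasesAwayFrom (hK : K.Finite) (hVK : ∀ k ∈ K, ContinuousAt V k)
    (hVnn : ∀ᶠ n in atTop, 0 ≤ V (x n)) (hγ : ∀ n, 0 ≤ γ n) (hγ0 : Tendsto γ atTop (𝓝 0))
    (hγsum : Tendsto (fun N => ∑ n ∈ range N, γ n) atTop atTop) {C : ℝ} (hC : 0 < C)
    (hstep : ∀ᶠ n in atTop, dist (x (n + 1)) (x n) ≤ C * γ (n + 1))
    (hinc : ∀ θ > 0, ∀ᶠ n in atTop, V (x (n + 1)) ≤ V (x n) + θ)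
    (hdec : DecreasesAwayFrom K V x γ) : ∃ k ∈ K, Tendsto x atTop (𝓝 k) := by
  have hfreq := fun ε (hε : 0 < ε) =>
    frequently_mem_thickening_of_decreasesAwayFrom hVnn hγsum hdec hε
  obtain ⟨L, hL⟩ := exists_tendsto_comp_of_decreasesAwayFrom hK hVK hVnn hγ hinc hdec hfreq
  refine exists_tendsto_of_eventually_mem_thickening hK ?_ fun ε hε =>
    eventually_mem_thickening_of_decreasesAwayFrom hL hγ0 hC hstep hdec hfreq hε
  refine squeeze_zero' (Eventually.of_forall fun n => dist_nonneg) hstep ?_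
  simpa using (hγ0.comp (tendsto_add_atTop_nat 1)).const_mul C

theorem eventually_le_add_of_le_add_mul {Q : Set E} {φ : E → ℝ} (hQ : IsCompact Q)
    (hφ : ContinuousOn φ Q) (hxQ : ∀ᶠ n in atTop, x n ∈ Q) (hγ : ∀ n, 0 ≤ γ n)
    (hγ0 : Tendsto γ atTop (𝓝 0))
    (hV : ∀ η > 0, ∀ᶠ n in atTop, V (x (n + 1)) ≤ V (x n) + γ (n + 1) * (φ (x n) + η))
    {θ : ℝ} (hθ : 0 < θ) : ∀ᶠ n in atTop, V (x (n + 1)) ≤ V (x n) + θ := by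
  obtain ⟨M, hM⟩ := hQ.exists_bound_of_continuousOn hφ
  have hγM : Tendsto (fun n => γ (n + 1) * (M + 1)) atTop (𝓝 0) := by
    simpa using (hγ0.comp (tendsto_add_atTop_nat 1)).mul_const (M + 1)
  filter_upwards [hV 1 one_pos, hxQ, hγM.eventually_lt_const hθ] with n hVn hxn hγn
  have : φ (x n) ≤ M := (le_abs_self _).trans (hM _ hxn)
  nlinarith [hγ (n + 1)]

theorem decreasesAwayFrom_of_le_add_mul {Q : Set E} {φ : E → ℝ} (hQ : IsCompact Q)
    (hφ : ContinuousOn φ Q) (hφK : ∀ y ∈ Q \ K, φ y < 0) (hxQ : ∀ᶠ n in atTop, x n ∈ Q)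
    (hγ : ∀ n, 0 ≤ γ n)
    (hV : ∀ η > 0, ∀ᶠ n in atTop, V (x (n + 1)) ≤ V (x n) + γ (n + 1) * (φ (x n) + η)) :
    DecreasesAwayFrom K V x γ := by
  intro ε hε
  have hR : IsCompact (Q \ thickening ε K) := hQ.diff isOpen_thickening
  obtain ⟨c, hc, hcφ⟩ := hR.exists_forall_le' (hφ.neg.mono Set.sdiff_subset)
    (a := 0) fun y hy => neg_pos.2 (hφK y ⟨hy.1, fun hyK => hy.2 (self_subset_thickening hε K hyK)⟩)
  refine ⟨c / 2, half_pos hc, ?_⟩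
  filter_upwards [hV (c / 2) (half_pos hc), hxQ] with n hVn hxn hfar
  have : φ (x n) ≤ -c := le_neg.1 (hcφ _ ⟨hxn, hfar⟩)
  nlinarith [hγ (n + 1)]

end Descent

theorem IsCompact.tendsto_sub_comp_add {E F α : Type*} [SeminormedAddCommGroup E]
    [SeminormedAddCommGroup F] {l : Filter α} {Q : Set E} (hQ : IsCompact Q) {f : E → F}
    (hf : ∀ y ∈ Q, ContinuousAt f y) {a t : α → E} (ha : ∀ᶠ n in l, a n ∈ Q)
    (ht : Tendsto t l (𝓝 0)) : Tendsto (fun n => f (a n) - f (a n + t n)) l (𝓝 0) := by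
  have hat : Tendsto (fun n => (a n, a n + t n)) l (𝓤 E) := by
    rw [uniformity_eq_comap_nhds_zero E, tendsto_comap_iff]
    simpa [Function.comp_def] using ht
  have hf' : Tendsto (fun n => (f (a n), f (a n + t n))) l (𝓤 F) := fun r hr => by
    have hr' : ∀ᶠ n in l, a n ∈ Q → (f (a n), f (a n + t n)) ∈ r :=
      hat (hQ.uniformContinuousAt_of_continuousAt f hf hr)
    exact (hr'.and ha).mono fun n hn => hn.1 hn.2
  rw [uniformity_eq_comap_nhds_zero F, tendsto_comap_iff] at hf'
  simpa using hf'.neg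

theorem exists_pos_eventually_norm_le {E : Type*} [NormedAddCommGroup E] {h : E → E} {Q : Set E}
    (hh : ContinuousOn h Q) (hQ : IsCompact Q) {x u : ℕ → E} (hxQ : ∀ᶠ n in atTop, x n ∈ Q)
    (huh : Tendsto (fun n => u n - h (x n)) atTop (𝓝 0)) : ∃ B > 0, ∀ᶠ n in atTop, ‖u n‖ ≤ B := by
  obtain ⟨H, hH⟩ := hQ.exists_bound_of_continuousOn hh
  refine ⟨|H| + 1, by positivity, ?_⟩
  filter_upwards [hxQ, (tendsto_norm_zero.comp huh).eventually_lt_const one_pos] with n hxn hun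
  linarith [norm_le_norm_add_norm_sub' (u n) (h (x n)), hH _ hxn, le_abs_self H,
    show ‖u n - h (x n)‖ < 1 from hun]

section FirstOrder

variable {E : Type*} [NormedAddCommGroup E] [NormedSpace ℝ E]

theorem IsCompact.exists_forall_norm_sub_sub_fderiv_le {F : Type*} [NormedAddCommGroup F]
    [NormedSpace ℝ F] {f : E → F} {O Q : Set E} (hO : IsOpen O) (hf : ContDiffOn ℝ 1 f O)
    (hQ : IsCompact Q) (hQO : Q ⊆ O) {ε : ℝ} (hε : 0 < ε) :
    ∃ δ > 0, ∀ y ∈ Q, ∀ z, dist z y < δ →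
      ‖f z - f y - fderiv ℝ f y (z - y)‖ ≤ ε * ‖z - y‖ := by
  have hF := hf.continuousOn_fderiv_of_isOpen hO le_rfl
  obtain ⟨δ₁, hδ₁, hunif⟩ := Metric.mem_uniformity_dist.1
    (hQ.uniformContinuousAt_of_continuousAt (fderiv ℝ f)
      (fun y hy => hF.continuousAt (hO.mem_nhds (hQO hy))) (Metric.dist_mem_uniformity hε))
  obtain ⟨δ₂, hδ₂, hδ₂O⟩ := hQ.exists_thickening_subset_open hO hQO
  refine ⟨min δ₁ δ₂, lt_min hδ₁ hδ₂, fun y hy z hz => ?_⟩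
  have hball : ball y (min δ₁ δ₂) ⊆ O :=
    (ball_subset_ball (min_le_right _ _)).trans ((ball_subset_thickening hy _).trans hδ₂O)
  refine (convex_ball y _).norm_image_sub_le_of_norm_hasFDerivWithin_le' (f' := fderiv ℝ f)
    (fun w hw => ?_) (fun w hw => ?_) (mem_ball_self (lt_min hδ₁ hδ₂)) hz
  · exact ((hf.differentiableOn one_ne_zero w (hball hw)).differentiableAt
      (hO.mem_nhds (hball hw))).hasFDerivAt.hasFDerivWithinAt
  · rw [← dist_eq_norm, dist_comm]
    exact (hunif ((mem_ball'.1 hw).trans_le (min_le_left _ _)) hy).le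

theorem norm_succ_sub_le_of_eq_add_smul {x u : ℕ → E} {γ : ℕ → ℝ} (hγ : ∀ n, 0 ≤ γ n)
    (hx : ∀ n, x (n + 1) = x n + γ (n + 1) • u n) {n : ℕ} {B : ℝ} (hun : ‖u n‖ ≤ B) :
    ‖x (n + 1) - x n‖ ≤ γ (n + 1) * B := by
  rw [hx, add_sub_cancel_left, norm_smul, Real.norm_of_nonneg (hγ _)]
  exact mul_le_mul_of_nonneg_left hun (hγ _)

theorem eventually_le_add_mul_fderiv_apply {V : E → ℝ} {h : E → E} {O Q : Set E} (hO : IsOpen O)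
    (hV : ContDiffOn ℝ 1 V O) (hQ : IsCompact Q) (hQO : Q ⊆ O) {x u : ℕ → E} {γ : ℕ → ℝ}
    (hγ : ∀ n, 0 ≤ γ n) (hγ0 : Tendsto γ atTop (𝓝 0)) (hx : ∀ n, x (n + 1) = x n + γ (n + 1) • u n)
    (hxQ : ∀ᶠ n in atTop, x n ∈ Q) {B : ℝ} (hB : 0 < B) (hu : ∀ᶠ n in atTop, ‖u n‖ ≤ B)
    (huh : Tendsto (fun n => u n - h (x n)) atTop (𝓝 0)) {η : ℝ} (hη : 0 < η) :
    ∀ᶠ n in atTop, V (x (n + 1)) ≤ V (x n) + γ (n + 1) * (fderiv ℝ V (x n) (h (x n)) + η) := by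
  obtain ⟨G, hG⟩ := hQ.exists_bound_of_continuousOn
    ((hV.continuousOn_fderiv_of_isOpen hO le_rfl).mono hQO)
  have herr : Tendsto (fun n => fderiv ℝ V (x n) (u n - h (x n))) atTop (𝓝 0) := by
    refine squeeze_zero_norm' ?_ (by simpa using (tendsto_norm_zero.comp huh).const_mul G)
    filter_upwards [hxQ] with n hxn
    exact (fderiv ℝ V (x n)).le_of_opNorm_le (hG _ hxn) _
  obtain ⟨δ, hδ, hTaylor⟩ :=
    hQ.exists_forall_norm_sub_sub_fderiv_le hO hV hQO (half_pos (div_pos hη hB))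
  have hγB : Tendsto (fun n => γ (n + 1) * B) atTop (𝓝 0) := by
    simpa using (hγ0.comp (tendsto_add_atTop_nat 1)).mul_const B
  filter_upwards [hxQ, hu, hγB.eventually_lt_const hδ,
    herr.eventually_lt_const (half_pos hη)] with n hxn hun hγn herrn
  have hstep := norm_succ_sub_le_of_eq_add_smul hγ hx hun
  have hT := (le_abs_self _).trans (hTaylor _ hxn _ (by rw [dist_eq_norm]; linarith))
  have hlin : fderiv ℝ V (x n) (x (n + 1) - x n) =
      γ (n + 1) * (fderiv ℝ V (x n) (h (x n)) + fderiv ℝ V (x n) (u n - h (x n))) := by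
    rw [hx, add_sub_cancel_left, map_smul, smul_eq_mul, map_sub]
    ring
  have hrem : η / B / 2 * ‖x (n + 1) - x n‖ ≤ γ (n + 1) * (η / 2) :=
    calc η / B / 2 * ‖x (n + 1) - x n‖ ≤ η / B / 2 * (γ (n + 1) * B) :=
          mul_le_mul_of_nonneg_left hstep (by positivity)
      _ = γ (n + 1) * (η / 2) := by field_simp
  linarith [mul_le_mul_of_nonneg_left herrn.le (hγ (n + 1))]

theorem exists_tendsto_of_lyapunov {V : E → ℝ} {h : E → E} {O Q K : Set E} (hO : IsOpen O)
    (hV : ContDiffOn ℝ 1 V O) (hVnn : ∀ y ∈ O, 0 ≤ V y) (hK : K.Finite) (hKO : K ⊆ O)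
    (hh : ContinuousOn h O) (hdesc : ∀ y ∈ O \ K, fderiv ℝ V y (h y) < 0) {γ : ℕ → ℝ}
    (hγ : ∀ n, 0 ≤ γ n) (hγ0 : Tendsto γ atTop (𝓝 0))
    (hγsum : Tendsto (fun N => ∑ n ∈ range N, γ n) atTop atTop) (hQ : IsCompact Q) (hQO : Q ⊆ O)
    {x u : ℕ → E} (hx : ∀ n, x (n + 1) = x n + γ (n + 1) • u n) (hxQ : ∀ᶠ n in atTop, x n ∈ Q)
    (huh : Tendsto (fun n => u n - h (x n)) atTop (𝓝 0)) : ∃ k ∈ K, Tendsto x atTop (𝓝 k) := by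
  obtain ⟨B, hB, hu⟩ := exists_pos_eventually_norm_le (hh.mono hQO) hQ hxQ huh
  have hφ : ContinuousOn (fun y => fderiv ℝ V y (h y)) Q :=
    ((hV.continuousOn_fderiv_of_isOpen hO le_rfl).clm_apply hh).mono hQO
  have hVx := fun η (hη : 0 < η) =>
    eventually_le_add_mul_fderiv_apply hO hV hQ hQO hγ hγ0 hx hxQ hB hu huh hη
  refine exists_tendsto_of_decreasesAwayFrom hK
    (fun k hk => hV.continuousOn.continuousAt (hO.mem_nhds (hKO hk)))
    (hxQ.mono fun n hn => hVnn _ (hQO hn)) hγ hγ0 hγsum hB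
    (hu.mono fun n hn => by
      simpa [dist_eq_norm, mul_comm] using norm_succ_sub_le_of_eq_add_smul hγ hx hn)
    (fun θ hθ => eventually_le_add_of_le_add_mul hQ hφ hxQ hγ hγ0 hVx hθ)
    (decreasesAwayFrom_of_le_add_mul hQ hφ (fun y hy => hdesc y ⟨hQO hy.1, hy.2⟩) hxQ hγ hVx)

end FirstOrder

theorem exists_tendsto_zero_shift {E : Type*} [NormedAddCommGroup E] [NormedSpace ℝ E]
    {m e r : ℕ → E} {h : E → E} {γ : ℕ → ℝ}
    (hrec : ∀ n, m (n + 1) = m n + γ (n + 1) • h (m n) + γ (n + 1) • (e (n + 1) + r (n + 1)))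
    {s : E} (hs : Tendsto (fun N => ∑ n ∈ range N, γ n • e n) atTop (𝓝 s)) :
    ∃ t : ℕ → E, Tendsto t atTop (𝓝 0) ∧
      ∀ n, m (n + 1) + t (n + 1) = m n + t n + γ (n + 1) • (h (m n) + r (n + 1)) := by
  refine ⟨fun n => s - ∑ i ∈ range (n + 1), γ i • e i, ?_, fun n => ?_⟩
  · simpa using (tendsto_const_nhds (x := s)).sub (hs.comp (tendsto_add_atTop_nat 1))
  · simp only [hrec n, sum_range_succ _ (n + 1), smul_add]
    abel

theorem delyon_deterministic_core_general
    (d : ℕ) (O : Set (EuclideanSpace ℝ (Fin d))) (hO : IsOpen O)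
    (V : EuclideanSpace ℝ (Fin d) → ℝ)
    (hV : ContDiffOn ℝ 1 V O) (hVnn : ∀ x ∈ O, 0 ≤ V x)
    (Kset : Set (EuclideanSpace ℝ (Fin d))) (hKfin : Kset.Finite)
    (hKO : Kset ⊆ O)
    (h : EuclideanSpace ℝ (Fin d) → EuclideanSpace ℝ (Fin d))
    (hh : ContinuousOn h O)
    (hdesc : ∀ x ∈ O \ Kset, ⟪gradient V x, h x⟫ < 0)
    (γ : ℕ → ℝ) (hγpos : ∀ n, 0 < γ n)
    (hγ1 : Tendsto (fun N => ∑ n ∈ Finset.range N, γ n) atTop atTop)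
    (hγ2 : Summable fun n => γ n ^ 2)
    (m e r : ℕ → EuclideanSpace ℝ (Fin d))
    (hrec : ∀ n, m (n + 1) =
      m n + γ (n + 1) • h (m n) + γ (n + 1) • (e (n + 1) + r (n + 1)))
    (hseries : ∃ s, Tendsto (fun N => ∑ n ∈ Finset.range N, γ n • e n)
      atTop (𝓝 s))
    (hr : Tendsto r atTop (𝓝 0))
    (hcpt : ∃ Q : Set (EuclideanSpace ℝ (Fin d)),
      IsCompact Q ∧ Q ⊆ O ∧ ∀ n, m n ∈ Q) :
    (∃ x ∈ Kset, Tendsto (fun n => V (m n)) atTop (𝓝 (V x))) ∧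
    Tendsto (fun n => Metric.infDist (m n) Kset) atTop (𝓝 0) := by
  obtain ⟨Q, hQ, hQO, hmQ⟩ := hcpt
  obtain ⟨δ, hδ, hQδO⟩ := hQ.exists_cthickening_subset_open hO hQO
  obtain ⟨s, hs⟩ := hseries
  obtain ⟨t, ht, hxrec⟩ := exists_tendsto_zero_shift hrec hs
  have hγ0 : Tendsto γ atTop (𝓝 0) := by
    simpa [Real.sqrt_sq (hγpos _).le] using hγ2.tendsto_atTop_zero.sqrt
  have hxQ : ∀ᶠ n in atTop, m n + t n ∈ cthickening δ Q :=
    (tendsto_norm_zero.comp ht).eventually_le_const hδ |>.mono fun n hn =>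
      mem_cthickening_of_dist_le _ _ _ _ (hmQ n) (by simpa [dist_eq_norm] using hn)
  have hhx : Tendsto (fun n => h (m n) + r (n + 1) - h (m n + t n)) atTop (𝓝 0) := by
    simpa [sub_add_eq_add_sub] using (hQ.tendsto_sub_comp_add
      (fun y hy => hh.continuousAt (hO.mem_nhds (hQO hy))) (.of_forall hmQ) ht).add
      (hr.comp (tendsto_add_atTop_nat 1))
  obtain ⟨k, hk, hxk⟩ := exists_tendsto_of_lyapunov hO hV hVnn hKfin hKO hh
    (fun y hy => by simpa using hdesc y hy) (fun n => (hγpos n).le) hγ0 hγ1 hQ.cthickening hQδO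
    hxrec hxQ hhx
  have hmk : Tendsto m atTop (𝓝 k) := by simpa using hxk.sub ht
  refine ⟨⟨k, hk, (hV.continuousOn.continuousAt (hO.mem_nhds (hKO hk))).tendsto.comp hmk⟩, ?_⟩
  have := ((continuous_infDist_pt Kset).tendsto k).comp hmk
  rwa [infDist_zero_of_mem hk] at this

/-- **Deterministic core of Delyon's stochastic approximation theorem.**
If `V` is a nonnegative `C¹` Lyapunov function on an open set `𝒪`, tending to
`+∞` at `∂𝒪` and at infinity, `𝒦 ⊂ 𝒪` is finite, `h` is continuous with
`⟨∇V, h⟩ < 0` off `𝒦`, the steps satisfy `∑ γₙ = ∞`, `∑ γₙ² < ∞`, the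
perturbed recursion `mₙ = mₙ₋₁ + γₙ h(mₙ₋₁) + γₙ (eₙ + rₙ)` has `∑ γₙ eₙ`
convergent, `rₙ → 0`, and `(mₙ)` stays in a compact subset of `𝒪`, then
`V(mₙ)` converges to a value of `V` on `𝒦` and `dist(mₙ, 𝒦) → 0`. -/
theorem delyon_deterministic_core
    (d : ℕ) (O : Set (EuclideanSpace ℝ (Fin d))) (hO : IsOpen O)
    (V : EuclideanSpace ℝ (Fin d) → ℝ)
    (hV : ContDiffOn ℝ 1 V O) (hVnn : ∀ x ∈ O, 0 ≤ V x)
    (hVinf : ∀ C : ℝ, ∃ Q : Set (EuclideanSpace ℝ (Fin d)),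
      IsCompact Q ∧ Q ⊆ O ∧ ∀ x ∈ O \ Q, C < V x)
    (Kset : Set (EuclideanSpace ℝ (Fin d))) (hKfin : Kset.Finite)
    (hKO : Kset ⊆ O)
    (h : EuclideanSpace ℝ (Fin d) → EuclideanSpace ℝ (Fin d))
    (hh : ContinuousOn h O)
    (hdesc : ∀ x ∈ O \ Kset, ⟪gradient V x, h x⟫ < 0)
    (γ : ℕ → ℝ) (hγpos : ∀ n, 0 < γ n)
    (hγ1 : Tendsto (fun N => ∑ n ∈ Finset.range N, γ n) atTop atTop)
    (hγ2 : Summable fun n => γ n ^ 2)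
    (m e r : ℕ → EuclideanSpace ℝ (Fin d))
    (hrec : ∀ n, m (n + 1) =
      m n + γ (n + 1) • h (m n) + γ (n + 1) • (e (n + 1) + r (n + 1)))
    (hseries : ∃ s, Tendsto (fun N => ∑ n ∈ Finset.range N, γ n • e n)
      atTop (𝓝 s))
    (hr : Tendsto r atTop (𝓝 0))
    (hcpt : ∃ Q : Set (EuclideanSpace ℝ (Fin d)),
      IsCompact Q ∧ Q ⊆ O ∧ ∀ n, m n ∈ Q) :
    (∃ x ∈ Kset, Tendsto (fun n => V (m n)) atTop (𝓝 (V x))) ∧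
    Tendsto (fun n => Metric.infDist (m n) Kset) atTop (𝓝 0) :=
  delyon_deterministic_core_general d O hO V hV hVnn Kset hKfin hKO h hh hdesc γ hγpos hγ1 hγ2 m e r
    hrec hseries hr hcpt
end

section
/- (Real-sequence lemma used in the proof of Delyon's theorem.) Let A ⊂ ℝ be a finite union of disjoint bounded open intervals, let ε > 0, C > 0, let γ_n > 0 with γ_n → 0 and Σ_n γ_n = ∞, and let (u_n) be a sequence of real numbers that is bounded below and satisfies, for all n larger than some N: u_n ≤ u_{n-1} − γ_n ε whenever u_{n-1} ∉ A, and |u_n − u_{n-1}| ≤ γ_n C for all n. Then dist(u_n, A) → 0 as n → ∞. -/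
open Filter Topology

/-!
Since `u` is bounded below and drops by `γₙ ε` at every step taken outside `A`, while
`∑ γₙ = ∞`, it visits `A` infinitely often. Once the steps are at most `δ / 2`, `u` cannot
cross upwards a window `[t, t + δ / 2)` containing no point of `A`: below the window it only
rises from points of `A`, which lie below `t`. Applied at a time `k` with
`dist(u k, A) ≥ δ`, this keeps `u` below `u k + δ / 2` forever after; applied at a later
visit `m` to `A`, it forces any still later `u k'` with `dist(u k', A) ≥ δ` to lie at least
`δ` below `u m`. Hence successive values of `u` at distance `≥ δ` from `A` drop by `δ / 2`,
which boundedness below allows only finitely often.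
-/

open Finset in
theorem tendsto_atBot_of_le_sub_of_tendsto_sum {u a : ℕ → ℝ} {n₀ : ℕ}
    (hdec : ∀ n ≥ n₀, u (n + 1) ≤ u n - a (n + 1))
    (ha : Tendsto (fun n => ∑ i ∈ range n, a i) atTop atTop) :
    Tendsto u atTop atBot := by
  have hinv : ∀ n ≥ n₀, u n + ∑ i ∈ range (n + 1), a i ≤ u n₀ + ∑ i ∈ range (n₀ + 1), a i := by
    refine Nat.le_induction le_rfl fun n hn ih => ?_
    rw [sum_range_succ]
    linarith [hdec n hn]
  have hbound : Tendsto (fun n => (u n₀ + ∑ i ∈ range (n₀ + 1), a i) + -∑ i ∈ range (n + 1), a i)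
      atTop atBot :=
    tendsto_atBot_add_const_left _ _ <|
      tendsto_neg_atTop_atBot.comp <| (tendsto_add_atTop_iff_nat 1).2 ha
  refine tendsto_atBot_mono' _ ((eventually_ge_atTop n₀).mono fun n hn => ?_) hbound
  linarith [hinv n hn]

theorem frequently_mem_of_le_sub_of_notMem {A : Set ℝ} {u γ : ℕ → ℝ} {ε : ℝ} {N : ℕ}
    (hε : 0 < ε) (hγ : Tendsto (fun n => ∑ i ∈ Finset.range n, γ i) atTop atTop)
    (hbdd : BddBelow (Set.range u))
    (hdec : ∀ n ≥ N, u n ∉ A → u (n + 1) ≤ u n - γ (n + 1) * ε) :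
    ∃ᶠ n in atTop, u n ∈ A := by
  by_contra hnot
  obtain ⟨n₀, hn₀⟩ := eventually_atTop.1 ((not_frequently.1 hnot).and (eventually_ge_atTop N))
  refine not_bddBelow_of_tendsto_atBot (tendsto_atBot_of_le_sub_of_tendsto_sum (a := (γ · * ε))
    (fun n hn => hdec n (hn₀ n hn).2 (hn₀ n hn).1) ?_) hbdd
  simpa only [← Finset.sum_mul] using hγ.atTop_mul_const hε

theorem not_bddBelow_range_of_forall_exists_le_sub {ι : Type*} {u : ι → ℝ} {P : ι → Prop}
    {c : ℝ} (hc : 0 < c) (hP : ∃ k, P k) (hdrop : ∀ k, P k → ∃ k', P k' ∧ u k' ≤ u k - c) :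
    ¬ BddBelow (Set.range u) := by
  rintro ⟨b, hb⟩
  obtain ⟨k₀, hk₀⟩ := hP
  have hiter : ∀ i : ℕ, ∃ k, P k ∧ u k ≤ u k₀ - i * c := by
    intro i
    induction i with
    | zero => exact ⟨k₀, hk₀, by simp⟩
    | succ i ih =>
      obtain ⟨k, hk, hle⟩ := ih
      obtain ⟨k', hk', hle'⟩ := hdrop k hk
      exact ⟨k', hk', by push_cast; linarith⟩
  obtain ⟨i, hi⟩ := exists_nat_gt ((u k₀ - b) / c)
  obtain ⟨k, -, hk⟩ := hiter i
  have : u k₀ - b < i * c := (div_lt_iff₀ hc).1 hi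
  linarith [hb ⟨k, rfl⟩]

theorem disjoint_of_le_infDist {A s : Set ℝ} {x δ : ℝ} (hδ : δ ≤ Metric.infDist x A)
    (hs : s ⊆ Set.Ioo (x - δ) (x + δ)) : Disjoint A s :=
  (Metric.disjoint_ball_infDist.mono_left <| by
    rw [← Real.ball_eq_Ioo] at hs; exact hs.trans (Metric.ball_subset_ball hδ)).symm

theorem lt_of_disjoint_Ico {A : Set ℝ} {u : ℕ → ℝ} {n₀ : ℕ} {r t : ℝ}
    (hdec : ∀ k ≥ n₀, u k ∉ A → u (k + 1) ≤ u k) (hstep : ∀ k ≥ n₀, u (k + 1) ≤ u k + r)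
    (hgap : Disjoint A (Set.Ico t (t + r))) {n m : ℕ}
    (hn₀ : n₀ ≤ n) (hn : u n < t + r) (hnm : n ≤ m) : u m < t + r := by
  induction m, hnm using Nat.le_induction with
  | base => exact hn
  | succ k hk ih =>
    by_cases hA : u k ∈ A
    · have hkt : u k < t := not_le.1 fun h => hgap.notMem_of_mem_left hA ⟨h, ih⟩
      linarith [hstep k (hn₀.trans hk)]
    · linarith [hdec k (hn₀.trans hk) hA]

theorem lt_sub_of_le_infDist {A : Set ℝ} {u : ℕ → ℝ} {n₀ : ℕ} {δ : ℝ} (hδ : 0 < δ)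
    (hdec : ∀ k ≥ n₀, u k ∉ A → u (k + 1) ≤ u k) (hstep : ∀ k ≥ n₀, u (k + 1) ≤ u k + δ / 2)
    {k m k' : ℕ} (hk : n₀ ≤ k) (hkm : k ≤ m) (hmk' : m ≤ k') (hm : u m ∈ A)
    (hfar : δ ≤ Metric.infDist (u k) A) (hfar' : δ ≤ Metric.infDist (u k') A) :
    u k' < u k - δ / 2 := by
  have hbelow : ∀ j ≥ k, u j < u k + δ / 2 := fun j hj =>
    lt_of_disjoint_Ico hdec hstep (disjoint_of_le_infDist hfar fun y hy => by
      constructor <;> linarith [hy.1, hy.2]) hk (by linarith) hj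
  rcases le_abs'.1 ((Real.dist_eq _ _ ▸ Metric.infDist_le_dist_of_mem hm).trans' hfar') with h | h
  · linarith [hbelow m hkm]
  · have := lt_of_disjoint_Ico hdec hstep (t := u k' - δ / 2)
      (disjoint_of_le_infDist hfar' fun y hy => by constructor <;> linarith [hy.1, hy.2])
      (hk.trans hkm) (by linarith) hmk'
    linarith

theorem delyon_real_sequence_lemma_general
    (A : Set ℝ)
    (ε C : ℝ) (hε : 0 < ε)
    (γ : ℕ → ℝ) (hγpos : ∀ n, 0 < γ n)
    (hγ0 : Tendsto γ atTop (𝓝 0))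
    (hγ1 : Tendsto (fun N => ∑ n ∈ Finset.range N, γ n) atTop atTop)
    (u : ℕ → ℝ) (hbdd : BddBelow (Set.range u))
    (N : ℕ)
    (hdec : ∀ n ≥ N, u n ∉ A → u (n + 1) ≤ u n - γ (n + 1) * ε)
    (hstep : ∀ n ≥ N, |u (n + 1) - u n| ≤ γ (n + 1) * C) :
    Tendsto (fun n => Metric.infDist (u n) A) atTop (𝓝 0) := by
  have hvisit := frequently_atTop.1 (frequently_mem_of_le_sub_of_notMem hε hγ1 hbdd hdec)
  refine tendsto_order.2 ⟨fun a ha => .of_forall fun n => ha.trans_le Metric.infDist_nonneg,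
    fun δ hδ => ?_⟩
  by_contra hnear
  have hfar := frequently_atTop.1 ((not_eventually.1 hnear).mono fun _ => le_of_not_gt)
  have hsmall : ∀ᶠ k in atTop, γ (k + 1) * C ≤ δ / 2 :=
    ((tendsto_add_atTop_iff_nat 1).2 (by simpa using hγ0.mul_const C)).eventually_le_const
      (half_pos hδ)
  obtain ⟨n₀, hn₀⟩ := eventually_atTop.1 ((eventually_ge_atTop N).and hsmall)
  have hdec' : ∀ k ≥ n₀, u k ∉ A → u (k + 1) ≤ u k := fun k hk hA =>
    (hdec k (hn₀ k hk).1 hA).trans (sub_le_self _ (mul_pos (hγpos _) hε).le)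
  have hstep' : ∀ k ≥ n₀, u (k + 1) ≤ u k + δ / 2 := fun k hk => by
    linarith [le_of_abs_le (hstep k (hn₀ k hk).1), (hn₀ k hk).2]
  refine not_bddBelow_range_of_forall_exists_le_sub (half_pos hδ)
    (P := fun k => n₀ ≤ k ∧ δ ≤ Metric.infDist (u k) A) (hfar n₀) (fun k ⟨hk, hk_far⟩ => ?_) hbdd
  obtain ⟨m, hkm, hm⟩ := hvisit k
  obtain ⟨k', hmk', hk'_far⟩ := hfar m
  exact ⟨k', ⟨hk.trans (hkm.trans hmk'), hk'_far⟩,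
    (lt_sub_of_le_infDist hδ hdec' hstep' hk hkm hmk' hm hk_far hk'_far).le⟩

/-- **Real-sequence lemma from the proof of Delyon's theorem.**
Let `A` be a finite union of pairwise disjoint bounded open intervals, and
let `(uₙ)` be bounded below with `uₙ ≤ uₙ₋₁ − γₙ ε` whenever `uₙ₋₁ ∉ A` and
`|uₙ − uₙ₋₁| ≤ γₙ C` always (for `n` beyond some `N`), where `γₙ > 0`,
`γₙ → 0` and `∑ γₙ = ∞`.  Then `dist(uₙ, A) → 0`. -/
theorem delyon_real_sequence_lemma
    (F : Finset (ℝ × ℝ)) (A : Set ℝ)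
    (hA : A = ⋃ p ∈ F, Set.Ioo p.1 p.2)
    (hdisj : (F : Set (ℝ × ℝ)).Pairwise fun p q =>
      Disjoint (Set.Ioo p.1 p.2) (Set.Ioo q.1 q.2))
    (ε C : ℝ) (hε : 0 < ε) (hC : 0 < C)
    (γ : ℕ → ℝ) (hγpos : ∀ n, 0 < γ n)
    (hγ0 : Tendsto γ atTop (𝓝 0))
    (hγ1 : Tendsto (fun N => ∑ n ∈ Finset.range N, γ n) atTop atTop)
    (u : ℕ → ℝ) (hbdd : BddBelow (Set.range u))
    (N : ℕ)
    (hdec : ∀ n ≥ N, u n ∉ A → u (n + 1) ≤ u n - γ (n + 1) * ε)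
    (hstep : ∀ n ≥ N, |u (n + 1) - u n| ≤ γ (n + 1) * C) :
    Tendsto (fun n => Metric.infDist (u n) A) atTop (𝓝 0) :=
  delyon_real_sequence_lemma_general A ε C hε γ hγpos hγ0 hγ1 u hbdd N hdec hstep
end

section
/- (Stability of selective states in a BCM network.) Let L be a symmetric real n×n matrix with operator norm ‖L‖ < 1, let β_1, …, β_n > 0, and let C be a symmetric positive definite K×K matrix. Then every eigenvalue of the nK×nK matrix (diag(β_1, …, β_n)(I_n − L)^{-1}) ⊗ C is real and strictly positive. Consequently, every eigenvalue of the network Jacobian J = −(diag(β)(I − L)^{-1}) ⊗ C is real and strictly negative, so the selective states of a laterally connected network of triplet BCM neurons — at which each neuron's Jacobian block equals −β_i I and the network Jacobian takes this Kronecker form with C = Dᵀ P D — are stable. -/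
/-!
With `D = diagonal √β`, the matrix `diagonal β * (1 - L)⁻¹ ⊗ C` is conjugate by `D ⊗ 1` to
`(D * (1 - L)⁻¹ * D) ⊗ C`. The latter is positive definite: `1 - L` is, because `‖L‖ < 1`, hence so
are its inverse, the congruent matrix `D * (1 - L)⁻¹ * D`, and its Kronecker product with `C`.
Conjugate matrices have the same spectrum, and the complex spectrum of a real positive definite
matrix consists of positive reals.
-/

open Matrix Kronecker
open scoped ComplexOrder

theorem IsConj.spectrum_eq {R A : Type*} [CommSemiring R] [Ring A] [Algebra R A] {a b : A}
    (h : IsConj a b) : spectrum R a = spectrum R b := by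
  obtain ⟨c, hc⟩ := h
  rw [← spectrum.units_conjugate (u := c), hc.eq, Units.mul_inv_cancel_right]

theorem IsConj.kronecker_right {R n m : Type*} [CommRing R] [Fintype n] [DecidableEq n]
    [Fintype m] [DecidableEq m] {A B : Matrix n n R} (h : IsConj A B) (C : Matrix m m R) :
    IsConj (A ⊗ₖ C) (B ⊗ₖ C) := by
  obtain ⟨u, hu⟩ := h
  refine ⟨(u.isUnit.kronecker isUnit_one).unit, ?_⟩
  simp only [SemiconjBy, IsUnit.unit_spec, ← mul_kronecker_mul, hu.eq, mul_one, one_mul]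

namespace Matrix

variable {n 𝕜 : Type*} [Fintype n] [DecidableEq n] [RCLike 𝕜]

theorem posDef_one_sub_of_norm_toEuclideanCLM_lt_one {L : Matrix n n 𝕜}
    (hL : L.IsHermitian) (hnorm : ‖toEuclideanCLM (𝕜 := 𝕜) L‖ < 1) : (1 - L).PosDef := by
  rw [posDef_iff_dotProduct_mulVec]
  refine ⟨isHermitian_one.sub hL, fun x hx => RCLike.pos_iff.mpr ⟨?_, ?_⟩⟩
  · set T := toEuclideanCLM (𝕜 := 𝕜) L
    set y : EuclideanSpace 𝕜 n := WithLp.toLp 2 x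
    have hy : 0 < ‖y‖ := by simpa [y] using hx
    have hself : RCLike.re (star x ⬝ᵥ x) = ‖y‖ ^ 2 := by
      rw [← inner_self_eq_norm_sq (𝕜 := 𝕜), EuclideanSpace.inner_eq_star_dotProduct,
        dotProduct_comm]
    have hbound : RCLike.re (star x ⬝ᵥ (L *ᵥ x)) ≤ ‖T‖ * ‖y‖ ^ 2 :=
      calc RCLike.re (star x ⬝ᵥ (L *ᵥ x)) = RCLike.re (inner 𝕜 y (T y)) := by
            simp [T, y, EuclideanSpace.inner_eq_star_dotProduct, dotProduct_comm]
        _ ≤ ‖y‖ * ‖T y‖ := re_inner_le_norm _ _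
        _ ≤ ‖y‖ * (‖T‖ * ‖y‖) := by gcongr; exact T.le_opNorm y
        _ = ‖T‖ * ‖y‖ ^ 2 := by ring
    rw [sub_mulVec, one_mulVec, dotProduct_sub, map_sub, hself]
    nlinarith [mul_lt_mul_of_pos_right hnorm (pow_pos hy 2)]
  · exact (isHermitian_one.sub hL).im_star_dotProduct_mulVec_self x

open scoped MatrixOrder in
theorem PosDef.map_algebraMap {M : Matrix n n ℝ} (hM : M.PosDef) :
    (M.map (algebraMap ℝ 𝕜)).PosDef := by
  refine (PosSemidef.posDef_iff_isUnit ?_).mpr (hM.isUnit.map (algebraMap ℝ 𝕜).mapMatrix)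
  obtain ⟨B, rfl⟩ := CStarAlgebra.nonneg_iff_eq_star_mul_self.mp hM.posSemidef.nonneg
  have hstar : (star B).map (algebraMap ℝ 𝕜) = (B.map (algebraMap ℝ 𝕜))ᴴ := by ext; simp
  rw [Matrix.map_mul, hstar]
  exact posSemidef_conjTranspose_mul_self _

theorem PosDef.pos_of_mem_spectrum {A : Matrix n n 𝕜} (hA : A.PosDef) {z : 𝕜}
    (hz : z ∈ spectrum 𝕜 A) : 0 < z := by
  obtain ⟨_, ⟨i, rfl⟩, rfl⟩ := hA.isHermitian.spectrum_eq_image_range ▸ hz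
  exact RCLike.ofReal_pos.mpr (hA.eigenvalues_pos i)

theorem pos_of_mem_spectrum_map_of_isConj {P A : Matrix n n ℝ} (hP : P.PosDef)
    (h : IsConj P A) {z : 𝕜} (hz : z ∈ spectrum 𝕜 (A.map (algebraMap ℝ 𝕜))) : 0 < z :=
  hP.map_algebraMap.pos_of_mem_spectrum <|
    ((algebraMap ℝ 𝕜).mapMatrix.toMonoidHom.map_isConj h).spectrum_eq (R := 𝕜) ▸ hz

theorem PosDef.diagonal_mul_mul_diagonal {Q : Matrix n n ℝ} (hQ : Q.PosDef) {d : n → ℝ}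
    (hd : ∀ i, d i ≠ 0) : (diagonal d * Q * diagonal d).PosDef := by
  have hD : IsUnit (diagonal d) := isUnit_diagonal.mpr (Pi.isUnit_iff.mpr fun i => (hd i).isUnit)
  simpa [star_eq_conjTranspose] using hD.posDef_star_left_conjugate_iff.mpr hQ

theorem isConj_diagonal_mul {d : n → ℝ} (hd : ∀ i, 0 < d i) (Q : Matrix n n ℝ) :
    IsConj (diagonal (fun i => √(d i)) * Q * diagonal (fun i => √(d i))) (diagonal d * Q) := by
  have hD : IsUnit (diagonal fun i => √(d i)) :=
    isUnit_diagonal.mpr (Pi.isUnit_iff.mpr fun i => (Real.sqrt_pos.mpr (hd i)).ne'.isUnit)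
  refine ⟨hD.unit, ?_⟩
  have hsq : diagonal (fun i => √(d i)) * diagonal (fun i => √(d i)) = diagonal d := by
    rw [diagonal_mul_diagonal]
    exact congrArg diagonal (funext fun i => Real.mul_self_sqrt (hd i).le)
  simp only [SemiconjBy, IsUnit.unit_spec, ← hsq, Matrix.mul_assoc]

end Matrix

/-- **Stability of selective states in a BCM network.**
For symmetric `L` with operator norm `< 1`, positive `β i`, and symmetric
positive definite `C`, every (complex) eigenvalue of
`(diag β (I − L)⁻¹) ⊗ C` is real and strictly positive; consequently every
eigenvalue of the network Jacobian `J = −(diag β (I − L)⁻¹) ⊗ C` is real and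
strictly negative. -/
theorem network_jacobian_eigenvalues_negative
    (nn K : ℕ)
    (L : Matrix (Fin nn) (Fin nn) ℝ) (hLsym : L.IsSymm)
    (hL : ‖Matrix.toEuclideanCLM (𝕜 := ℝ) L‖ < 1)
    (β : Fin nn → ℝ) (hβ : ∀ i, 0 < β i)
    (C : Matrix (Fin K) (Fin K) ℝ) (hC : C.PosDef) :
    (∀ z : ℂ, z ∈ spectrum ℂ
        (((Matrix.diagonal β * (1 - L)⁻¹) ⊗ₖ C).map Complex.ofReal) →
      z.im = 0 ∧ 0 < z.re) ∧
    (∀ z : ℂ, z ∈ spectrum ℂ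
        ((-((Matrix.diagonal β * (1 - L)⁻¹) ⊗ₖ C)).map Complex.ofReal) →
      z.im = 0 ∧ z.re < 0) := by
  have hQ : ((1 - L)⁻¹).PosDef :=
    (posDef_one_sub_of_norm_toEuclideanCLM_lt_one (isHermitian_iff_isSymm.mpr hLsym) hL).inv
  have hP := (hQ.diagonal_mul_mul_diagonal fun i => (Real.sqrt_pos.mpr (hβ i)).ne').kronecker hC
  have hpos : ∀ z ∈ spectrum ℂ (((diagonal β * (1 - L)⁻¹) ⊗ₖ C).map Complex.ofReal), 0 < z :=
    fun z => pos_of_mem_spectrum_map_of_isConj hP ((isConj_diagonal_mul hβ _).kronecker_right C)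
  refine ⟨fun z hz => ?_, fun z hz => ?_⟩
  · obtain ⟨hre, him⟩ := Complex.pos_iff.mp (hpos z hz)
    exact ⟨him.symm, hre⟩
  · rw [Matrix.map_neg _ Complex.ofReal_neg, ← spectrum.neg_eq, Set.mem_neg] at hz
    obtain ⟨hre, him⟩ := Complex.lt_def.mp (neg_pos.mp (hpos _ hz))
    exact ⟨him, hre⟩
end

section
/- (Expected triplet BCM update equals the classical BCM update on the mixture means.) Let (Ω, ℱ, P) be a probability space, Z : Ω → {1, …, K} a latent class with P(Z = k) = α_k > 0, Σα_k = 1, and d¹, d², d³ : Ω → ℝ^n square-integrable random vectors that are mutually independent with common conditional mean E[dⁱ | Z = k] = d_k ∈ ℝ^n under each conditional measure P(· | Z = k). Fix m ∈ ℝ^n and set cⁱ = ⟨m, dⁱ⟩ and θ = E[c¹ c²] = Σ_k α_k ⟨m, d_k⟩². Then E[c²(c³ − θ) d¹] = Σ_{k=1}^K α_k c_k (c_k − θ) d_k, where c_k = ⟨m, d_k⟩. In particular, the expected triplet BCM update under the mixture model equals the expected classical BCM update for the discrete input model on the mixture means d_1, …, d_K with probabilities α_1, …, α_K. -/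
/-!
Conditioning on the latent class writes the expectation under `P` as the `α`-weighted sum of
the expectations under the components `P[|Z ⁻¹' {k}]`. Under each component the three views
are independent with common mean `d k`, so the expectation of a product `∏ᵢ (aᵢ ⬝ᵥ Xᵢ + bᵢ)`
of affine functions of the views is `∏ᵢ (aᵢ ⬝ᵥ d k + bᵢ)`. Both `c¹ c²` and `d¹ⱼ c² (c³ − θ)`
are products of this form.
-/

open MeasureTheory ProbabilityTheory Matrix

section

variable {Ω : Type*} [MeasurableSpace Ω] {μ : Measure Ω}

lemma MeasureTheory.Integrable.cond {E : Type*} [NormedAddCommGroup E] {f : Ω → E}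
    (hf : Integrable f μ) (s : Set Ω) : Integrable f μ[|s] := by
  by_cases hs : μ s = 0
  · simp [cond_eq_zero_of_meas_eq_zero hs]
  · exact hf.restrict.smul_measure (ENNReal.inv_ne_top.2 hs)

namespace ProbabilityTheory

lemma integral_eq_sum_measureReal_smul_integral_cond_fiber {ι E : Type*} [Fintype ι]
    [MeasurableSpace ι] [DiscreteMeasurableSpace ι] [NormedAddCommGroup E] [NormedSpace ℝ E]
    [IsFiniteMeasure μ]
    {Z : Ω → ι} (hZ : Measurable Z) {f : Ω → E} (hf : ∀ k, Integrable f μ[|Z ⁻¹' {k}]) :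
    ∫ ω, f ω ∂μ = ∑ k, μ.real (Z ⁻¹' {k}) • ∫ ω, f ω ∂μ[|Z ⁻¹' {k}] := by
  conv_lhs => rw [← sum_meas_smul_cond_fiber hZ μ]
  rw [integral_finsetSum_measure fun k _ => (hf k).smul_measure (measure_ne_top _ _)]
  simp only [integral_smul_measure, measureReal_def]

lemma iIndepFun.integrable_finsetProd {ι : Type*} {Y : ι → Ω → ℝ} (hY : iIndepFun Y μ)
    (hint : ∀ i, Integrable (Y i) μ) (s : Finset ι) : Integrable (∏ i ∈ s, Y i) μ := by
  classical
  have := hY.isProbabilityMeasure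
  induction s using Finset.induction_on with
  | empty =>
    rw [Finset.prod_empty]
    exact integrable_const 1
  | insert i s hi ih =>
    rw [Finset.prod_insert hi, mul_comm]
    exact (hY.indepFun_finsetProd_of_notMem₀ (fun i => (hint i).aemeasurable) hi).integrable_mul
      ih (hint i)

lemma integrable_dotProduct {ν : Type*} [Fintype ν] {X : Ω → ν → ℝ} (hX : Integrable X μ)
    (a : ν → ℝ) : Integrable (fun ω => a ⬝ᵥ X ω) μ :=
  integrable_finsetSum _ fun j _ => (hX.eval j).const_mul (a j)

lemma integral_dotProduct {ν : Type*} [Fintype ν] {X : Ω → ν → ℝ} (hX : Integrable X μ)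
    (a : ν → ℝ) : ∫ ω, a ⬝ᵥ X ω ∂μ = a ⬝ᵥ ∫ ω, X ω ∂μ := by
  simp only [dotProduct]
  rw [integral_finsetSum _ fun j _ => (hX.eval j).const_mul (a j)]
  simp only [integral_const_mul, eval_integral hX.eval]

lemma iIndepFun.integral_prod_dotProduct_add {ι ν : Type*} [Fintype ι] [Fintype ν]
    {X : ι → Ω → ν → ℝ} (hX : iIndepFun X μ) (hint : ∀ i, Integrable (X i) μ)
    (a : ι → ν → ℝ) (b : ι → ℝ) :
    Integrable (fun ω => ∏ i, (a i ⬝ᵥ X i ω + b i)) μ ∧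
      ∫ ω, ∏ i, (a i ⬝ᵥ X i ω + b i) ∂μ = ∏ i, (a i ⬝ᵥ ∫ ω, X i ω ∂μ + b i) := by
  have := hX.isProbabilityMeasure
  have hf : ∀ i, Continuous fun v : ν → ℝ => a i ⬝ᵥ v + b i := fun i => by fun_prop
  have hfX : ∀ i, Integrable (fun ω => a i ⬝ᵥ X i ω + b i) μ := fun i =>
    (integrable_dotProduct (hint i) (a i)).add (integrable_const (b i))
  refine ⟨?_, ?_⟩
  · simpa only [Finset.prod_fn, Function.comp_apply] using
      ((hX.comp _ fun i => (hf i).measurable).integrable_finsetProd hfX Finset.univ)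
  · rw [hX.integral_fun_prod_comp (fun i => (hint i).aemeasurable)
      fun i => (hf i).aestronglyMeasurable]
    congr 1 with i
    rw [integral_add (integrable_dotProduct (hint i) (a i)) (integrable_const _),
      integral_dotProduct (hint i), integral_const, probReal_univ, one_smul]

end ProbabilityTheory

end

theorem triplet_bcm_expected_update_general
    {Ω : Type*} [MeasurableSpace Ω] (P : Measure Ω) [IsProbabilityMeasure P]
    (K n : ℕ) (Z : Ω → Fin K) (hZ : Measurable Z)
    (α : Fin K → ℝ) (hα : ∀ k, 0 < α k)
    (hPZ : ∀ k, P (Z ⁻¹' {k}) = ENNReal.ofReal (α k))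
    (X : Fin 3 → Ω → Fin n → ℝ)
    (hX2 : ∀ i, MemLp (X i) 2 P)
    (d : Fin K → Fin n → ℝ)
    (hindep : ∀ k,
      iIndepFun X (P[|Z ⁻¹' {k}]))
    (hmean : ∀ i k j, (∫ ω, X i ω j ∂(P[|Z ⁻¹' {k}])) = d k j)
    (m : Fin n → ℝ) (θ : ℝ) (hθ : θ = ∑ k, α k * (m ⬝ᵥ d k) ^ 2) :
    (∫ ω, (m ⬝ᵥ X 0 ω) * (m ⬝ᵥ X 1 ω) ∂P) = θ ∧
    (∀ j, (∫ ω, (m ⬝ᵥ X 1 ω) * ((m ⬝ᵥ X 2 ω) - θ) * X 0 ω j ∂P) =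
      ∑ k, α k * ((m ⬝ᵥ d k) * ((m ⬝ᵥ d k) - θ) * d k j)) := by
  have hint : ∀ i k, Integrable (X i) P[|Z ⁻¹' {k}] := fun i k =>
    ((hX2 i).integrable one_le_two).cond _
  have hmeanVec : ∀ i k, ∫ ω, X i ω ∂P[|Z ⁻¹' {k}] = d k := fun i k =>
    funext fun j => (eval_integral (hint i k).eval j).trans (hmean i k j)
  have hweight : ∀ k, P.real (Z ⁻¹' {k}) = α k := fun k => by
    rw [measureReal_def, hPZ, ENNReal.toReal_ofReal (hα k).le]
  have hmoment := fun k => (hindep k).integral_prod_dotProduct_add (hint · k)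
  constructor
  · have h := fun k => hmoment k ![m, m, 0] ![0, 0, 1]
    simp only [Fin.prod_univ_three, cons_val_zero, cons_val_one, cons_val, zero_dotProduct,
      add_zero, zero_add, mul_one, hmeanVec] at h
    rw [integral_eq_sum_measureReal_smul_integral_cond_fiber hZ fun k => (h k).1, hθ]
    simp only [(h _).2, hweight, smul_eq_mul, sq]
  · intro j
    have h := fun k => hmoment k ![Pi.single j 1, m, m] ![0, 0, -θ]
    simp only [Fin.prod_univ_three, cons_val_zero, cons_val_one, cons_val, single_dotProduct,
      one_mul, add_zero, ← sub_eq_add_neg, hmeanVec] at h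
    have hrearrange : ∀ ω, m ⬝ᵥ X 1 ω * (m ⬝ᵥ X 2 ω - θ) * X 0 ω j =
        X 0 ω j * m ⬝ᵥ X 1 ω * (m ⬝ᵥ X 2 ω - θ) := fun ω => by ring
    simp only [hrearrange]
    rw [integral_eq_sum_measureReal_smul_integral_cond_fiber hZ fun k => (h k).1]
    simp only [(h _).2, hweight, smul_eq_mul]
    exact Finset.sum_congr rfl fun k _ => by ring

/-- **Expected triplet BCM update equals the classical BCM update on the
mixture means.**  For conditionally independent square-integrable views
`X 0, X 1, X 2` with conditional means `d k` given the latent class `Z = k`,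
and `cⁱ = ⟨m, Xⁱ⟩`, `θ = ∑ k, α k ⟨m, d k⟩²`, one has `E[c¹c²] = θ` and
`E[c²(c³ − θ) X¹] = ∑ k, α k c_k (c_k − θ) d k` where `c_k = ⟨m, d k⟩`. -/
theorem triplet_bcm_expected_update
    {Ω : Type*} [MeasurableSpace Ω] (P : Measure Ω) [IsProbabilityMeasure P]
    (K n : ℕ) (Z : Ω → Fin K) (hZ : Measurable Z)
    (α : Fin K → ℝ) (hα : ∀ k, 0 < α k) (hαsum : ∑ k, α k = 1)
    (hPZ : ∀ k, P (Z ⁻¹' {k}) = ENNReal.ofReal (α k))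
    (X : Fin 3 → Ω → Fin n → ℝ) (hXmeas : ∀ i, Measurable (X i))
    (hX2 : ∀ i, MemLp (X i) 2 P)
    (d : Fin K → Fin n → ℝ)
    (hindep : ∀ k,
      iIndepFun X (P[|Z ⁻¹' {k}]))
    (hmean : ∀ i k j, (∫ ω, X i ω j ∂(P[|Z ⁻¹' {k}])) = d k j)
    (m : Fin n → ℝ) (θ : ℝ) (hθ : θ = ∑ k, α k * (m ⬝ᵥ d k) ^ 2) :
    (∫ ω, (m ⬝ᵥ X 0 ω) * (m ⬝ᵥ X 1 ω) ∂P) = θ ∧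
    (∀ j, (∫ ω, (m ⬝ᵥ X 1 ω) * ((m ⬝ᵥ X 2 ω) - θ) * X 0 ω j ∂P) =
      ∑ k, α k * ((m ⬝ᵥ d k) * ((m ⬝ᵥ d k) - θ) * d k j)) :=
  triplet_bcm_expected_update_general P K n Z hZ α hα hPZ X hX2 d hindep hmean m θ hθ
end
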